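/- arXiv:1508.07675 — 2 statements merged into one kernel-verified Lean document; each statement's English description precedes it below -/
import Mathlib

section
/- The 2D endpoint trace estimate fails: there does not exist a constant C such that for every symmetric smooth compactly supported function ψ : ℝ²×ℝ² → ℂ one has ∫_{ℝ²} |ψ(x,x)|² dx ≤ C ∫_{ℝ²}∫_{ℝ²} |∇_{x₁}ψ(x₁,x₂)|² dx₁dx₂. Equivalently, for every C > 0 there exists a symmetric ψ ∈ C_c^∞(ℝ²×ℝ²) with ∫_{ℝ²} |ψ(x,x)|² dx > C ∫∫ |∇_{x₁}ψ(x₁,x₂)|² dx₁dx₂. -/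
noncomputable section

open MeasureTheory

/-- `ℝ²` as a Euclidean space. -/
abbrev R2 : Type := EuclideanSpace ℝ (Fin 2)

/-- `ℝ² × ℝ²` as a Euclidean space. -/
abbrev D2 : Type := EuclideanSpace ℝ (Fin 2 × Fin 2)

/-- The point `(x₁, x₂) ∈ ℝ² × ℝ²`. -/
def pack (a b : R2) : D2 :=
  (EuclideanSpace.equiv (Fin 2 × Fin 2) ℝ).symm fun p =>
    if p.1 = 0 then EuclideanSpace.equiv (Fin 2) ℝ a p.2
    else EuclideanSpace.equiv (Fin 2) ℝ b p.2

/-- `|∇_{x_i} f|²` at `x` for `f : ℝ²×ℝ² → ℂ`, `i = 0, 1`. -/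
def gradSqD (i : Fin 2) (f : D2 → ℂ) (x : D2) : ℝ :=
  ∑ a : Fin 2, ‖fderiv ℝ f x (EuclideanSpace.single (i, a) (1 : ℝ))‖ ^ 2


open Metric Real Set


/-- A bound for the derivative of `Real.smoothTransition`. -/
lemma exists_stM : ∃ M : ℝ, 1 ≤ M ∧ ∀ t : ℝ, |deriv Real.smoothTransition t| ≤ M := by
  have hct : Continuous (deriv Real.smoothTransition) :=
    (Real.smoothTransition.contDiff (n := ⊤)).continuous_deriv (by exact_mod_cast le_top)
  have hcs : HasCompactSupport (deriv Real.smoothTransition) := by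
    apply HasCompactSupport.intro (isCompact_Icc (a := (0:ℝ)) (b := 1))
    intro t ht
    simp only [Set.mem_Icc, not_and_or, not_le] at ht
    rcases ht with ht | ht
    · have he : Real.smoothTransition =ᶠ[nhds t] fun _ => (0:ℝ) := by
        filter_upwards [Iio_mem_nhds ht] with s hs
        exact Real.smoothTransition.zero_of_nonpos hs.le
      rw [he.deriv_eq, deriv_const]
    · have he : Real.smoothTransition =ᶠ[nhds t] fun _ => (1:ℝ) := by
        filter_upwards [Ioi_mem_nhds ht] with s hs
        exact Real.smoothTransition.one_of_one_le hs.le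
      rw [he.deriv_eq, deriv_const]
  obtain ⟨M, hM⟩ := hcs.exists_bound_of_continuous hct
  exact ⟨max 1 M, le_max_left _ _,
    fun t => le_trans (by simpa using hM t) (le_max_right _ _)⟩

def cM : ℝ := exists_stM.choose

lemma cM_one : 1 ≤ cM := exists_stM.choose_spec.1
lemma cM_pos : 0 < cM := lt_of_lt_of_le one_pos cM_one
lemma cM_bound (t : ℝ) : |deriv Real.smoothTransition t| ≤ cM :=
  exists_stM.choose_spec.2 t

open Classical in
/-- smooth radial cutoff: equals 1 for `‖x‖² ≤ exp a`, 0 for `‖x‖² ≥ exp b`. -/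
def Wf (a b : ℝ) (x : R2) : ℝ :=
  if x = 0 then 1 else Real.smoothTransition ((b - Real.log (‖x‖ ^ 2)) / (b - a))

lemma Wf_nonneg (a b : ℝ) (x : R2) : 0 ≤ Wf a b x := by
  unfold Wf; split
  · norm_num
  · exact Real.smoothTransition.nonneg _

lemma Wf_apply_ne {a b : ℝ} {x : R2} (hx : x ≠ 0) :
    Wf a b x = Real.smoothTransition ((b - Real.log (‖x‖ ^ 2)) / (b - a)) := by
  unfold Wf; rw [if_neg hx]

lemma Wf_le_one (a b : ℝ) (x : R2) : Wf a b x ≤ 1 := by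
  unfold Wf; split
  · exact le_rfl
  · exact Real.smoothTransition.le_one _

lemma Wf_eq_one {a b : ℝ} (hab : a < b) {x : R2} (hx : ‖x‖ ^ 2 ≤ Real.exp a) :
    Wf a b x = 1 := by
  unfold Wf; split
  · rfl
  · rename_i h0
    have hpos : (0:ℝ) < ‖x‖ ^ 2 := pow_pos (norm_pos_iff.mpr h0) 2
    have hlog : Real.log (‖x‖ ^ 2) ≤ a := (Real.log_le_iff_le_exp hpos).2 hx
    apply Real.smoothTransition.one_of_one_le
    rw [le_div_iff₀ (by linarith)]
    linarith

lemma Wf_eq_zero {a b : ℝ} (hab : a < b) {x : R2} (hx : Real.exp b ≤ ‖x‖ ^ 2) :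
    Wf a b x = 0 := by
  have h0 : x ≠ 0 := by
    intro h
    rw [h] at hx
    norm_num at hx
    exact absurd hx (not_le.2 (Real.exp_pos b))
  rw [Wf_apply_ne h0]
  apply Real.smoothTransition.zero_of_nonpos
  have hpos : (0:ℝ) < ‖x‖ ^ 2 := pow_pos (norm_pos_iff.mpr h0) 2
  have hlog : b ≤ Real.log (‖x‖ ^ 2) := (Real.le_log_iff_exp_le hpos).2 hx
  apply div_nonpos_of_nonpos_of_nonneg <;> linarith

lemma Wf_neg (a b : ℝ) (x : R2) : Wf a b (-x) = Wf a b x := by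
  unfold Wf
  simp only [norm_neg, neg_eq_zero]

lemma Wf_contDiff {a b : ℝ} (hab : a < b) : ContDiff ℝ (⊤ : ℕ∞) (Wf a b) := by
  rw [contDiff_iff_contDiffAt]
  intro x
  by_cases hx : ‖x‖ ^ 2 < Real.exp a
  · have hev : Wf a b =ᶠ[nhds x] fun _ => (1:ℝ) := by
      have hop : IsOpen {y : R2 | ‖y‖ ^ 2 < Real.exp a} := by
        have : Continuous fun y : R2 => ‖y‖ ^ 2 := by fun_prop
        exact isOpen_lt this continuous_const
      filter_upwards [hop.mem_nhds hx] with y hy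
      exact Wf_eq_one hab hy.le
    exact contDiffAt_const.congr_of_eventuallyEq hev
  · have h0 : x ≠ 0 := by
      intro h; rw [h] at hx; simp [Real.exp_pos] at hx
    have hev : Wf a b =ᶠ[nhds x]
        fun y => Real.smoothTransition ((b - Real.log (‖y‖ ^ 2)) / (b - a)) := by
      filter_upwards [isOpen_compl_singleton.mem_nhds h0] with y hy
      exact Wf_apply_ne hy
    apply ContDiffAt.congr_of_eventuallyEq _ hev
    apply Real.smoothTransition.contDiffAt.comp
    apply ContDiffAt.div_const
    apply ContDiffAt.sub contDiffAt_const
    exact ContDiffAt.comp x (Real.contDiffAt_log.2 (pow_ne_zero 2 (norm_ne_zero_iff.2 h0)))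
      (contDiff_norm_sq ℝ).contDiffAt

lemma Wf_support {a b : ℝ} (hab : a < b) :
    HasCompactSupport (Wf a b) := by
  apply HasCompactSupport.intro (isCompact_closedBall (0:R2) (Real.exp (b/2)))
  intro x hx
  simp only [mem_closedBall, dist_zero_right, not_le] at hx
  apply Wf_eq_zero hab
  have : Real.exp b = (Real.exp (b/2))^2 := by
    rw [sq, ← Real.exp_add]; norm_num
  rw [this]
  apply pow_le_pow_left₀ (Real.exp_pos _).le hx.le

open scoped RealInnerProductSpace

def gradSq (f : R2 → ℝ) (x : R2) : ℝ :=
  ∑ j : Fin 2, (fderiv ℝ f x (EuclideanSpace.single j 1)) ^ 2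

lemma gradSq_nonneg (f : R2 → ℝ) (x : R2) : 0 ≤ gradSq f x :=
  Finset.sum_nonneg fun _ _ => sq_nonneg _

lemma norm_sq_eq_sum (x : R2) : ‖x‖ ^ 2 = ∑ j : Fin 2, x j ^ 2 := by
  rw [← real_inner_self_eq_norm_sq]
  simp only [PiLp.inner_apply, RCLike.inner_apply, conj_trivial, sq]

lemma sum_inner_single_sq (x : R2) :
    ∑ j : Fin 2, (⟪x, EuclideanSpace.single j (1:ℝ)⟫) ^ 2 = ‖x‖ ^ 2 := by
  rw [norm_sq_eq_sum]
  congr 1; funext j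
  rw [real_inner_comm, EuclideanSpace.inner_single_left]
  simp

lemma Wf_fderiv_apply {a b : ℝ} (hab : a < b) {x : R2} (hx : x ≠ 0) (v : R2) :
    fderiv ℝ (Wf a b) x v =
      deriv Real.smoothTransition ((b - Real.log (‖x‖ ^ 2)) / (b - a)) *
        (-(2 / ((b - a) * ‖x‖ ^ 2)) * ⟪x, v⟫) := by
  have hs : (0:ℝ) < ‖x‖ ^ 2 := pow_pos (norm_pos_iff.mpr hx) 2
  have h1 : HasFDerivAt (fun y : R2 => ‖y‖ ^ 2) ((2:ℕ) • innerSL ℝ x) x :=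
    (hasStrictFDerivAt_norm_sq x).hasFDerivAt
  have h2 : HasDerivAt Real.log (‖x‖ ^ 2)⁻¹ (‖x‖ ^ 2) := Real.hasDerivAt_log hs.ne'
  have h3 : HasFDerivAt (fun y : R2 => Real.log (‖y‖ ^ 2))
      ((‖x‖ ^ 2)⁻¹ • (2:ℕ) • innerSL ℝ x) x := by have := h2.comp_hasFDerivAt x h1; exact this
  have h4 : HasFDerivAt (fun y : R2 => (b - a)⁻¹ * (b - Real.log (‖y‖ ^ 2)))
      ((b - a)⁻¹ • -((‖x‖ ^ 2)⁻¹ • (2:ℕ) • innerSL ℝ x)) x :=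
    (h3.const_sub b).const_mul ((b - a)⁻¹)
  have h5 : HasDerivAt Real.smoothTransition
      (deriv Real.smoothTransition ((b - a)⁻¹ * (b - Real.log (‖x‖ ^ 2))))
      ((b - a)⁻¹ * (b - Real.log (‖x‖ ^ 2))) :=
    ((Real.smoothTransition.contDiff (n := 1)).differentiable (by norm_num) _).hasDerivAt
  have h6 : HasFDerivAt
      (fun y : R2 => Real.smoothTransition ((b - a)⁻¹ * (b - Real.log (‖y‖ ^ 2))))
      ((deriv Real.smoothTransition ((b - a)⁻¹ * (b - Real.log (‖x‖ ^ 2)))) •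
        ((b - a)⁻¹ • -((‖x‖ ^ 2)⁻¹ • (2:ℕ) • innerSL ℝ x))) x := by have := h5.comp_hasFDerivAt x h4; exact this
  have hev : Wf a b =ᶠ[nhds x]
      fun y => Real.smoothTransition ((b - a)⁻¹ * (b - Real.log (‖y‖ ^ 2))) := by
    filter_upwards [isOpen_compl_singleton.mem_nhds hx] with y hy
    rw [Wf_apply_ne hy, div_eq_inv_mul]
  rw [Filter.EventuallyEq.fderiv_eq hev, h6.fderiv, div_eq_inv_mul]
  simp only [ContinuousLinearMap.coe_smul', Pi.smul_apply,
    ContinuousLinearMap.neg_apply, innerSL_apply_apply, smul_eq_mul,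
    ContinuousLinearMap.smul_apply, nsmul_eq_mul, Nat.cast_ofNat]
  field_simp

def majW (a b : ℝ) : R2 → ℝ := fun x =>
  (2 * cM / (b - a)) ^ 2 *
    Set.indicator (Set.Icc (Real.exp (a/2)) (Real.exp (b/2))) (fun r => (r ^ 2)⁻¹) ‖x‖

lemma majW_nonneg (a b : ℝ) (x : R2) : 0 ≤ majW a b x := by
  apply mul_nonneg (sq_nonneg _)
  apply Set.indicator_nonneg
  intro r _; positivity

lemma fderiv_of_locally_const {f : R2 → ℝ} {x : R2} {c : ℝ} {s : Set R2} (hs : IsOpen s)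
    (hxs : x ∈ s) (hc : ∀ y ∈ s, f y = c) : fderiv ℝ f x = 0 := by
  have hev : f =ᶠ[nhds x] fun _ => c := by
    filter_upwards [hs.mem_nhds hxs] with y hy using hc y hy
  rw [hev.fderiv_eq, fderiv_fun_const]
  rfl

lemma gradSq_Wf_le {a b : ℝ} (hab : a < b) (x : R2) :
    gradSq (Wf a b) x ≤ majW a b x := by
  by_cases hmem : ‖x‖ ∈ Set.Icc (Real.exp (a/2)) (Real.exp (b/2))
  · have hx : x ≠ 0 := by
      intro h
      rw [h] at hmem
      simp only [norm_zero] at hmem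
      exact absurd hmem.1 (not_le.2 (Real.exp_pos _))
    have hs : (0:ℝ) < ‖x‖ ^ 2 := pow_pos (norm_pos_iff.mpr hx) 2
    set d := deriv Real.smoothTransition ((b - Real.log (‖x‖ ^ 2)) / (b - a)) with hd
    have hdb : d ^ 2 ≤ cM ^ 2 := by
      rw [← sq_abs d]
      apply pow_le_pow_left₀ (abs_nonneg _) (cM_bound _)
    unfold gradSq
    have hrw : ∀ j : Fin 2, fderiv ℝ (Wf a b) x (EuclideanSpace.single j 1) =
        d * (-(2 / ((b - a) * ‖x‖ ^ 2))) * ⟪x, EuclideanSpace.single j (1:ℝ)⟫ := by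
      intro j
      rw [Wf_fderiv_apply hab hx]
      ring
    simp_rw [hrw, mul_pow]
    rw [← Finset.mul_sum, sum_inner_single_sq]
    unfold majW
    rw [Set.indicator_of_mem hmem]
    have hba : (0:ℝ) < b - a := by linarith
    have key : (d ^ 2 * (-(2 / ((b - a) * ‖x‖ ^ 2))) ^ 2) * ‖x‖ ^ 2
        = 4 * d ^ 2 / ((b - a) ^ 2 * ‖x‖ ^ 2) := by
      field_simp
      ring
    have key2 : (2 * cM / (b - a)) ^ 2 * (‖x‖ ^ 2)⁻¹
        = 4 * cM ^ 2 / ((b - a) ^ 2 * ‖x‖ ^ 2) := by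
      field_simp
      ring
    rw [key, key2]
    gcongr
  · have hz : fderiv ℝ (Wf a b) x = 0 := by
      simp only [Set.mem_Icc, not_and_or, not_le] at hmem
      rcases hmem with hmem | hmem
      · apply fderiv_of_locally_const (s := {y : R2 | ‖y‖ ^ 2 < Real.exp a})
        · exact isOpen_lt (by fun_prop) continuous_const
        · have : ‖x‖ ^ 2 < (Real.exp (a/2)) ^ 2 :=
            pow_lt_pow_left₀ hmem (norm_nonneg _) (by norm_num)
          simpa [← Real.exp_add, show a/2 + a/2 = a by ring, sq, ← Real.exp_add] using this
        · intro y hy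
          exact Wf_eq_one hab (le_of_lt hy)
      · apply fderiv_of_locally_const (s := {y : R2 | Real.exp b < ‖y‖ ^ 2})
        · exact isOpen_lt continuous_const (by fun_prop)
        · have : (Real.exp (b/2)) ^ 2 < ‖x‖ ^ 2 :=
            pow_lt_pow_left₀ hmem (Real.exp_pos _).le (by norm_num)
          simpa [sq, ← Real.exp_add, show b/2 + b/2 = b by ring] using this
        · intro y hy
          exact Wf_eq_zero hab (le_of_lt hy)
    unfold gradSq
    rw [hz]
    simp only [ContinuousLinearMap.zero_apply]
    simpa using majW_nonneg a b x

lemma majW_integrable {a b : ℝ} (hab : a < b) : Integrable (majW a b) := by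
  unfold majW
  apply Integrable.const_mul
  have hmeas : MeasurableSet {x : R2 | ‖x‖ ∈ Set.Icc (Real.exp (a/2)) (Real.exp (b/2))} :=
    continuous_norm.measurable measurableSet_Icc
  have heq : (fun x : R2 =>
      Set.indicator (Set.Icc (Real.exp (a/2)) (Real.exp (b/2))) (fun r => (r ^ 2)⁻¹) ‖x‖)
      = Set.indicator {x : R2 | ‖x‖ ∈ Set.Icc (Real.exp (a/2)) (Real.exp (b/2))}
        (fun x => (‖x‖ ^ 2)⁻¹) := by
    funext x
    exact (Set.indicator_comp_right (fun x : R2 => ‖x‖)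
      (g := fun r => (r ^ 2)⁻¹) (x := x)).symm
  rw [heq, integrable_indicator_iff hmeas]
  refine Measure.integrableOn_of_bounded (M := ((Real.exp (a/2)) ^ 2)⁻¹) ?_ ?_ ?_
  · apply ne_top_of_le_ne_top (measure_closedBall_lt_top (μ := (volume : Measure R2)) (x := (0:R2))
      (r := Real.exp (b/2))).ne
    apply measure_mono
    intro x hx
    simpa [Metric.mem_closedBall] using hx.2
  · exact ((continuous_norm.pow 2).measurable.inv).aestronglyMeasurable
  · filter_upwards [ae_restrict_mem hmeas] with x hx
    rw [Real.norm_eq_abs, abs_of_nonneg (by positivity)]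
    apply inv_anti₀ (by positivity)
    exact pow_le_pow_left₀ (Real.exp_pos _).le hx.1 2

lemma majW_integral {a b : ℝ} (hab : a < b) :
    ∫ x : R2, majW a b x
      = (2 * cM / (b - a)) ^ 2 * ((volume (ball (0:R2) 1)).toReal * (b - a)) := by
  unfold majW
  rw [MeasureTheory.integral_const_mul]
  congr 1
  rw [integral_fun_norm_addHaar volume
    (fun r => Set.indicator (Set.Icc (Real.exp (a/2)) (Real.exp (b/2))) (fun r => (r ^ 2)⁻¹) r)]
  rw [finrank_euclideanSpace_fin]
  have hea : (0:ℝ) < Real.exp (a/2) := Real.exp_pos _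
  have heq : (fun y : ℝ => y ^ (2-1) •
      Set.indicator (Set.Icc (Real.exp (a/2)) (Real.exp (b/2))) (fun r => (r ^ 2)⁻¹) y)
      = fun y => Set.indicator (Set.Icc (Real.exp (a/2)) (Real.exp (b/2))) (fun r => r⁻¹) y := by
    funext y
    by_cases hy : y ∈ Set.Icc (Real.exp (a/2)) (Real.exp (b/2))
    · have hy0 : y ≠ 0 := by
        have := hy.1; intro h; rw [h] at this; linarith
      rw [Set.indicator_of_mem hy, Set.indicator_of_mem hy]
      simp only [pow_one, smul_eq_mul]
      field_simp
      ring
    · rw [Set.indicator_of_notMem hy, Set.indicator_of_notMem hy, smul_zero]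
  rw [heq, setIntegral_indicator measurableSet_Icc]
  have hinter : Set.Ioi (0:ℝ) ∩ Set.Icc (Real.exp (a/2)) (Real.exp (b/2))
      = Set.Icc (Real.exp (a/2)) (Real.exp (b/2)) := by
    apply Set.inter_eq_self_of_subset_right
    intro y hy
    exact lt_of_lt_of_le hea hy.1
  rw [hinter]
  have hle : Real.exp (a/2) ≤ Real.exp (b/2) := Real.exp_le_exp.2 (by linarith)
  rw [MeasureTheory.integral_Icc_eq_integral_Ioc, ← intervalIntegral.integral_of_le hle,
    integral_inv_of_pos hea (Real.exp_pos _)]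
  rw [← Real.exp_sub]
  rw [Real.log_exp]
  rw [nsmul_eq_mul, smul_eq_mul]
  simp only [measureReal_def]
  ring

lemma gradSq_continuous {f : R2 → ℝ} (hf : ContDiff ℝ (⊤:ℕ∞) f) : Continuous (gradSq f) := by
  apply continuous_finset_sum
  intro j _
  exact ((hf.continuous_fderiv (by simp)).clm_apply continuous_const).pow 2

lemma gradSq_hasCompactSupport {f : R2 → ℝ} (hf : HasCompactSupport f) :
    HasCompactSupport (gradSq f) := by
  have hfd : HasCompactSupport (fderiv ℝ f) := hf.fderiv ℝ
  have : gradSq f = (fun L : R2 →L[ℝ] ℝ => ∑ j : Fin 2, (L (EuclideanSpace.single j 1)) ^ 2)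
      ∘ (fderiv ℝ f) := rfl
  rw [this]
  apply hfd.comp_left
  simp

lemma integral_gradSq_Wf_le {a b : ℝ} (hab : a < b) :
    ∫ x : R2, gradSq (Wf a b) x
      ≤ (2 * cM / (b - a)) ^ 2 * ((volume (ball (0:R2) 1)).toReal * (b - a)) := by
  rw [← majW_integral hab]
  apply integral_mono _ (majW_integrable hab) (gradSq_Wf_le hab)
  exact (gradSq_continuous (Wf_contDiff hab)).integrable_of_hasCompactSupport
    (gradSq_hasCompactSupport (Wf_support hab))

lemma pack_apply (a b : R2) (p : Fin 2 × Fin 2) :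
    pack a b p = if p.1 = 0 then a p.2 else b p.2 := rfl

def projL (i : Fin 2) : D2 →L[ℝ] R2 :=
  LinearMap.toContinuousLinearMap
    { toFun := fun x => (WithLp.toLp 2 (fun j => x (i, j)) : EuclideanSpace ℝ (Fin 2))
      map_add' := fun _ _ => rfl
      map_smul' := fun _ _ => rfl }

lemma projL_apply (i : Fin 2) (x : D2) (j : Fin 2) : projL i x j = x (i, j) := rfl

lemma projL_pack0 (a b : R2) : projL 0 (pack a b) = a := by
  ext j; rw [projL_apply, pack_apply]; simp

lemma projL_pack1 (a b : R2) : projL 1 (pack a b) = b := by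
  ext j; rw [projL_apply, pack_apply]; simp

lemma projL_single0 (a : Fin 2) :
    projL 0 (EuclideanSpace.single ((0 : Fin 2), a) (1:ℝ)) = EuclideanSpace.single a 1 := by
  ext j
  rw [projL_apply]
  simp [EuclideanSpace.single_apply, Prod.ext_iff]

lemma projL_single1 (a : Fin 2) :
    projL 1 (EuclideanSpace.single ((0 : Fin 2), a) (1:ℝ)) = 0 := by
  ext j
  rw [projL_apply]
  simp [EuclideanSpace.single_apply, Prod.ext_iff]

lemma norm_sq_split (x : D2) : ‖x‖ ^ 2 = ‖projL 0 x‖ ^ 2 + ‖projL 1 x‖ ^ 2 := by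
  have h : ‖x‖ ^ 2 = ∑ p : Fin 2 × Fin 2, x p ^ 2 := by
    rw [← real_inner_self_eq_norm_sq]
    simp only [PiLp.inner_apply, RCLike.inner_apply, conj_trivial, sq]
  rw [h, norm_sq_eq_sum, norm_sq_eq_sum, Fintype.sum_prod_type, Fin.sum_univ_two]
  rfl

def fin2Prod0 : Fin 2 ≃ {q : Fin 2 × Fin 2 // q.1 = 0} where
  toFun := fun j => ⟨(0, j), rfl⟩
  invFun := fun q => q.1.2
  left_inv := fun j => rfl
  right_inv := fun q => by
    rcases q with ⟨⟨i, j⟩, h⟩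
    simp only at h
    subst h
    rfl

def fin2Prod1 : Fin 2 ≃ {q : Fin 2 × Fin 2 // ¬(q.1 = 0)} where
  toFun := fun j => ⟨(1, j), by simp⟩
  invFun := fun q => q.1.2
  left_inv := fun j => rfl
  right_inv := fun q => by
    rcases q with ⟨⟨i, j⟩, h⟩
    have hi : i = 1 := by
      fin_cases i
      · exact absurd rfl h
      · rfl
    subst hi
    rfl

def unpackEquiv : D2 ≃ᵐ R2 × R2 :=
  ((MeasurableEquiv.toLp 2 (Fin 2 × Fin 2 → ℝ)).symm).trans <|
    (MeasurableEquiv.piEquivPiSubtypeProd (fun _ : Fin 2 × Fin 2 => ℝ)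
      (fun q => q.1 = 0)).trans <|
      MeasurableEquiv.prodCongr
        (((MeasurableEquiv.piCongrLeft (fun _ => ℝ) fin2Prod0).symm).trans
          ((MeasurableEquiv.toLp 2 (Fin 2 → ℝ)).symm).symm)
        (((MeasurableEquiv.piCongrLeft (fun _ => ℝ) fin2Prod1).symm).trans
          ((MeasurableEquiv.toLp 2 (Fin 2 → ℝ)).symm).symm)

lemma unpackEquiv_measurePreserving : MeasurePreserving unpackEquiv volume volume := by
  have hA : MeasurePreserving
      (⇑(((MeasurableEquiv.piCongrLeft (fun _ : {q : Fin 2 × Fin 2 // q.1 = 0} => ℝ)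
        fin2Prod0).symm).trans ((MeasurableEquiv.toLp 2 (Fin 2 → ℝ)).symm).symm))
      volume volume :=
    ((EuclideanSpace.volume_preserving_symm_measurableEquiv_toLp (Fin 2)).symm _).comp
      ((volume_measurePreserving_piCongrLeft (fun _ => ℝ) fin2Prod0).symm _)
  have hB : MeasurePreserving
      (⇑(((MeasurableEquiv.piCongrLeft (fun _ : {q : Fin 2 × Fin 2 // ¬(q.1 = 0)} => ℝ)
        fin2Prod1).symm).trans ((MeasurableEquiv.toLp 2 (Fin 2 → ℝ)).symm).symm))
      volume volume :=
    ((EuclideanSpace.volume_preserving_symm_measurableEquiv_toLp (Fin 2)).symm _).comp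
      ((volume_measurePreserving_piCongrLeft (fun _ => ℝ) fin2Prod1).symm _)
  have hprod : MeasurePreserving
      (⇑(MeasurableEquiv.prodCongr
        (((MeasurableEquiv.piCongrLeft (fun _ => ℝ) fin2Prod0).symm).trans
          ((MeasurableEquiv.toLp 2 (Fin 2 → ℝ)).symm).symm)
        (((MeasurableEquiv.piCongrLeft (fun _ => ℝ) fin2Prod1).symm).trans
          ((MeasurableEquiv.toLp 2 (Fin 2 → ℝ)).symm).symm)))
      volume volume := by
    rw [show (volume : Measure (({q : Fin 2 × Fin 2 // q.1 = 0} → ℝ) ×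
        ({q : Fin 2 × Fin 2 // ¬(q.1 = 0)} → ℝ))) = volume.prod volume from rfl,
      show (volume : Measure (R2 × R2)) = volume.prod volume from rfl]
    exact hA.prod hB
  exact (hprod.comp ((volume_preserving_piEquivPiSubtypeProd (fun _ : Fin 2 × Fin 2 => ℝ)
    (fun q => q.1 = 0)).comp
    (EuclideanSpace.volume_preserving_symm_measurableEquiv_toLp (Fin 2 × Fin 2))) : _)

lemma unpackEquiv_apply (x : D2) : unpackEquiv x = (projL 0 x, projL 1 x) := by
  unfold unpackEquiv
  ext1
  · ext j
    simp [MeasurableEquiv.trans, MeasurableEquiv.prodCongr, MeasurableEquiv.piCongrLeft,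
      MeasurableEquiv.piEquivPiSubtypeProd, Equiv.piEquivPiSubtypeProd,
      MeasurableEquiv.toLp, fin2Prod0, projL_apply]
    rfl
  · ext j
    simp [MeasurableEquiv.trans, MeasurableEquiv.prodCongr, MeasurableEquiv.piCongrLeft,
      MeasurableEquiv.piEquivPiSubtypeProd, Equiv.piEquivPiSubtypeProd,
      MeasurableEquiv.toLp, fin2Prod1, projL_apply]
    rfl

def shearE1 : (R2 × R2) ≃ᵐ (R2 × R2) where
  toFun := fun z => (z.1 - z.2, z.2)
  invFun := fun z => (z.1 + z.2, z.2)
  left_inv := fun z => by simp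
  right_inv := fun z => by simp
  measurable_toFun := by measurability
  measurable_invFun := by measurability

def shearE2 : (R2 × R2) ≃ᵐ (R2 × R2) where
  toFun := fun z => (z.1, z.2 - z.1)
  invFun := fun z => (z.1, z.2 + z.1)
  left_inv := fun z => by simp
  right_inv := fun z => by simp
  measurable_toFun := by measurability
  measurable_invFun := by measurability

lemma shear1_integrable {f g : R2 → ℝ} (hf : Integrable f) (hg : Integrable g) :
    Integrable (fun z : R2 × R2 => f (z.1 - z.2) * g z.2) := by
  have hmp : MeasurePreserving (fun z : R2 × R2 => (z.1 - z.2, z.2)) volume volume := by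
    rw [show (volume : Measure (R2 × R2)) = volume.prod volume from rfl]
    exact measurePreserving_sub_prod volume volume
  have base : Integrable (fun z : R2 × R2 => f z.1 * g z.2) := by
    rw [show (volume : Measure (R2 × R2)) = volume.prod volume from rfl]
    exact hf.mul_prod hg
  exact (hmp.integrable_comp_emb shearE1.measurableEmbedding).2 base

lemma shear1_integral (f g : R2 → ℝ) :
    ∫ z : R2 × R2, f (z.1 - z.2) * g z.2 = (∫ x, f x) * ∫ x, g x := by
  have hmp : MeasurePreserving (fun z : R2 × R2 => (z.1 - z.2, z.2)) volume volume := by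
    rw [show (volume : Measure (R2 × R2)) = volume.prod volume from rfl]
    exact measurePreserving_sub_prod volume volume
  have h := hmp.integral_comp shearE1.measurableEmbedding (fun z : R2 × R2 => f z.1 * g z.2)
  rw [show (∫ z : R2 × R2, f (z.1 - z.2) * g z.2) =
    ∫ z : R2 × R2, (fun w : R2 × R2 => f w.1 * g w.2) ((fun z : R2 × R2 => (z.1 - z.2, z.2)) z)
    from rfl, h, show (volume : Measure (R2 × R2)) = volume.prod volume from rfl,
    integral_prod_mul]

lemma shear2_integrable {f g : R2 → ℝ} (hf : Integrable f) (hg : Integrable g) :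
    Integrable (fun z : R2 × R2 => g z.1 * f (z.2 - z.1)) := by
  have hmp : MeasurePreserving (fun z : R2 × R2 => (z.1, z.2 - z.1)) volume volume := by
    rw [show (volume : Measure (R2 × R2)) = volume.prod volume from rfl]
    exact measurePreserving_prod_sub volume volume
  have base : Integrable (fun z : R2 × R2 => g z.1 * f z.2) := by
    rw [show (volume : Measure (R2 × R2)) = volume.prod volume from rfl]
    exact hg.mul_prod hf
  exact (hmp.integrable_comp_emb shearE2.measurableEmbedding).2 base

lemma shear2_integral (f g : R2 → ℝ) :
    ∫ z : R2 × R2, g z.1 * f (z.2 - z.1) = (∫ x, g x) * ∫ x, f x := by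
  have hmp : MeasurePreserving (fun z : R2 × R2 => (z.1, z.2 - z.1)) volume volume := by
    rw [show (volume : Measure (R2 × R2)) = volume.prod volume from rfl]
    exact measurePreserving_prod_sub volume volume
  have h := hmp.integral_comp shearE2.measurableEmbedding (fun z : R2 × R2 => g z.1 * f z.2)
  rw [show (∫ z : R2 × R2, g z.1 * f (z.2 - z.1)) =
    ∫ z : R2 × R2, (fun w : R2 × R2 => g w.1 * f w.2) ((fun z : R2 × R2 => (z.1, z.2 - z.1)) z)
    from rfl, h, show (volume : Measure (R2 × R2)) = volume.prod volume from rfl,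
    integral_prod_mul]

def ballInd (r : ℝ) : R2 → ℝ := Set.indicator (Metric.closedBall 0 r) 1

lemma ballInd_nonneg (r : ℝ) (x : R2) : 0 ≤ ballInd r x :=
  Set.indicator_nonneg (fun _ _ => zero_le_one) x

lemma ballInd_integrable (r : ℝ) : Integrable (ballInd r) := by
  unfold ballInd
  rw [integrable_indicator_iff measurableSet_closedBall]
  exact integrableOn_const measure_closedBall_lt_top.ne

lemma ballInd_integral {r : ℝ} (hr : 0 ≤ r) :
    ∫ x, ballInd r x = r ^ 2 * (volume (ball (0:R2) 1)).toReal := by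
  unfold ballInd
  rw [integral_indicator measurableSet_closedBall]
  simp only [Pi.one_apply, setIntegral_const, smul_eq_mul, mul_one]
  rw [measureReal_def, Measure.addHaar_closedBall volume 0 hr, finrank_euclideanSpace_fin,
    ENNReal.toReal_mul, ENNReal.toReal_ofReal (by positivity)]

lemma B_pos : 0 < (volume (ball (0:R2) 1)).toReal :=
  ENNReal.toReal_pos (measure_ball_pos volume 0 one_pos).ne' measure_ball_lt_top.ne

section Main

variable (T L : ℝ)

def PsiR : D2 → ℝ := fun x =>
  Wf (-T) 0 (projL 0 x - projL 1 x) *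
    (Wf (2 * Real.log L) (2 * Real.log L + 1) (projL 0 x) *
      Wf (2 * Real.log L) (2 * Real.log L + 1) (projL 1 x))

def psiC : D2 → ℂ := fun x => (PsiR T L x : ℂ)

variable {T L}
variable (hT : 0 < T) (hL : 1 ≤ L)

lemma hab1 (hT : 0 < T) : -T < 0 := by linarith

lemma hab2' : 2 * Real.log L < 2 * Real.log L + 1 := by linarith

include hT in
lemma PsiR_contDiff : ContDiff ℝ (⊤ : ℕ∞) (PsiR T L) := by
  apply ContDiff.mul
  · exact (Wf_contDiff (hab1 hT)).comp (((projL 0).contDiff).sub ((projL 1).contDiff))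
  · exact ((Wf_contDiff hab2').comp (projL 0).contDiff).mul
      ((Wf_contDiff hab2').comp (projL 1).contDiff)

include hT in
lemma psiC_contDiff : ContDiff ℝ (⊤ : ℕ∞) (psiC T L) :=
  Complex.ofRealCLM.contDiff.comp (PsiR_contDiff hT)

lemma PsiR_hasCompactSupport : HasCompactSupport (PsiR T L) := by
  set b2 := 2 * Real.log L + 1
  set RX := Real.exp (b2 / 2)
  apply HasCompactSupport.intro (isCompact_closedBall (0 : D2) (2 * RX + 1))
  intro x hx
  simp only [Metric.mem_closedBall, dist_zero_right, not_le] at hx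
  have hRX : 0 < RX := Real.exp_pos _
  have hnx : (2 * RX + 1) ^ 2 < ‖x‖ ^ 2 := by
    apply pow_lt_pow_left₀ hx (by positivity)
    norm_num
  have hsplit := norm_sq_split x
  have hcase : Real.exp b2 ≤ ‖projL 0 x‖ ^ 2 ∨ Real.exp b2 ≤ ‖projL 1 x‖ ^ 2 := by
    have hRX2 : RX ^ 2 = Real.exp b2 := by
      rw [sq, ← Real.exp_add]
      congr 1
      unfold b2
      ring
    by_contra hcon
    push_neg at hcon
    nlinarith [hcon.1, hcon.2, sq_nonneg RX]
  unfold PsiR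
  rcases hcase with h | h
  · rw [Wf_eq_zero hab2' h]
    ring
  · rw [Wf_eq_zero hab2' h]
    ring

lemma psiC_hasCompactSupport : HasCompactSupport (psiC T L) := by
  have h := PsiR_hasCompactSupport (T := T) (L := L)
  have : psiC T L = (fun r : ℝ => (r : ℂ)) ∘ PsiR T L := rfl
  rw [this]
  exact h.comp_left (by norm_num)

lemma psiC_symm (a b : R2) : psiC T L (pack a b) = psiC T L (pack b a) := by
  unfold psiC PsiR
  rw [projL_pack0, projL_pack1, projL_pack0, projL_pack1]
  rw [show a - b = -(b - a) from (neg_sub b a).symm, Wf_neg]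
  ring_nf

lemma fderiv_psiC_apply (hT : 0 < T) (x : D2) (v : D2) :
    fderiv ℝ (psiC T L) x v = ((fderiv ℝ (PsiR T L) x v : ℝ) : ℂ) := by
  have hd : DifferentiableAt ℝ (PsiR T L) x :=
    ((PsiR_contDiff hT).differentiable (by simp)).differentiableAt
  have h := Complex.ofRealCLM.hasFDerivAt.comp x hd.hasFDerivAt
  have : fderiv ℝ (psiC T L) x = Complex.ofRealCLM.comp (fderiv ℝ (PsiR T L) x) :=
    h.fderiv
  rw [this]
  rfl

lemma fderiv_PsiR_apply (hT : 0 < T) (x : D2) (a : Fin 2) :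
    fderiv ℝ (PsiR T L) x (EuclideanSpace.single ((0 : Fin 2), a) (1 : ℝ)) =
      fderiv ℝ (Wf (-T) 0) (projL 0 x - projL 1 x) (EuclideanSpace.single a 1) *
        (Wf (2 * Real.log L) (2 * Real.log L + 1) (projL 0 x) *
          Wf (2 * Real.log L) (2 * Real.log L + 1) (projL 1 x)) +
      Wf (-T) 0 (projL 0 x - projL 1 x) *
        (Wf (2 * Real.log L) (2 * Real.log L + 1) (projL 1 x) *
          fderiv ℝ (Wf (2 * Real.log L) (2 * Real.log L + 1)) (projL 0 x)
            (EuclideanSpace.single a 1)) := by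
  set u := projL 0 x - projL 1 x
  have hu : HasFDerivAt (fun y : D2 => projL 0 y - projL 1 y)
      ((projL 0 - projL 1 : D2 →L[ℝ] R2)) x := ((projL 0).hasFDerivAt).sub ((projL 1).hasFDerivAt)
  have hΦ : HasFDerivAt (Wf (-T) 0) (fderiv ℝ (Wf (-T) 0) u) u :=
    (((Wf_contDiff (hab1 hT)).differentiable (by simp)).differentiableAt).hasFDerivAt
  have h1 := hΦ.comp x hu
  have hX0 : HasFDerivAt (Wf (2 * Real.log L) (2 * Real.log L + 1))
      (fderiv ℝ (Wf (2 * Real.log L) (2 * Real.log L + 1)) (projL 0 x)) (projL 0 x) :=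
    (((Wf_contDiff hab2').differentiable (by simp)).differentiableAt).hasFDerivAt
  have hX1 : HasFDerivAt (Wf (2 * Real.log L) (2 * Real.log L + 1))
      (fderiv ℝ (Wf (2 * Real.log L) (2 * Real.log L + 1)) (projL 1 x)) (projL 1 x) :=
    (((Wf_contDiff hab2').differentiable (by simp)).differentiableAt).hasFDerivAt
  have h2 := hX0.comp x ((projL 0).hasFDerivAt)
  have h3 := hX1.comp x ((projL 1).hasFDerivAt)
  have h23 := h2.mul h3
  have hP := h1.mul h23
  have hfd := hP.fderiv
  rw [show PsiR T L = ((Wf (-T) 0 ∘ fun y : D2 => projL 0 y - projL 1 y) *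
      ((Wf (2 * Real.log L) (2 * Real.log L + 1) ∘ (projL 0)) *
        (Wf (2 * Real.log L) (2 * Real.log L + 1) ∘ (projL 1)))) from rfl, hfd]
  simp only [ContinuousLinearMap.add_apply, ContinuousLinearMap.smul_apply,
    ContinuousLinearMap.coe_comp', Function.comp_apply, ContinuousLinearMap.coe_sub',
    Pi.sub_apply, smul_eq_mul, Pi.mul_apply]
  rw [projL_single0, projL_single1, sub_zero, map_zero]
  unfold u
  ring

lemma Wf_sq_le_one (a b : ℝ) (y : R2) : (Wf a b y) ^ 2 ≤ 1 := by
  rw [← one_pow 2]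
  apply pow_le_pow_left₀ (Wf_nonneg a b y) (Wf_le_one a b y)

lemma Wf_sq_le_ballInd {a b : ℝ} (hab : a < b) (y : R2) :
    (Wf a b y) ^ 2 ≤ ballInd (Real.exp (b / 2)) y := by
  by_cases hy : y ∈ Metric.closedBall (0 : R2) (Real.exp (b / 2))
  · rw [ballInd, Set.indicator_of_mem hy]
    exact Wf_sq_le_one a b y
  · have hny : Real.exp (b / 2) < ‖y‖ := by
      simpa [Metric.mem_closedBall, dist_zero_right] using hy
    rw [ballInd, Set.indicator_of_notMem hy]
    have : Real.exp b ≤ ‖y‖ ^ 2 := by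
      have h2 : (Real.exp (b / 2)) ^ 2 ≤ ‖y‖ ^ 2 :=
        pow_le_pow_left₀ (Real.exp_pos _).le hny.le 2
      calc Real.exp b = (Real.exp (b / 2)) ^ 2 := by
            rw [sq, ← Real.exp_add]; congr 1; ring
        _ ≤ ‖y‖ ^ 2 := h2
    rw [Wf_eq_zero hab this]
    norm_num

lemma ballInd_symm (r : ℝ) (x y : R2) : ballInd r (x - y) = ballInd r (y - x) := by
  classical
  unfold ballInd
  rw [Set.indicator_apply, Set.indicator_apply]
  simp only [Metric.mem_closedBall, dist_zero_right, Pi.one_apply]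
  rw [norm_sub_rev]

lemma gradSqD_psiC_le (hT : 0 < T) (x : D2) :
    gradSqD 0 (psiC T L) x ≤
      2 * (majW (-T) 0 (projL 0 x - projL 1 x) *
        ballInd (Real.exp ((2 * Real.log L + 1) / 2)) (projL 1 x)) +
      2 * (majW (2 * Real.log L) (2 * Real.log L + 1) (projL 0 x) *
        ballInd 1 (projL 1 x - projL 0 x)) := by
  set u := projL 0 x - projL 1 x with hu
  set X0 := Wf (2 * Real.log L) (2 * Real.log L + 1) (projL 0 x) with hX0
  set X1 := Wf (2 * Real.log L) (2 * Real.log L + 1) (projL 1 x) with hX1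
  set Phu := Wf (-T) 0 u with hPhu
  have step1 : gradSqD 0 (psiC T L) x =
      ∑ a : Fin 2, (fderiv ℝ (PsiR T L) x (EuclideanSpace.single ((0:Fin 2), a) (1:ℝ))) ^ 2 := by
    unfold gradSqD
    congr 1
    funext a
    rw [fderiv_psiC_apply hT, Complex.norm_real, Real.norm_eq_abs, sq_abs]
  have step2 : ∀ a : Fin 2,
      (fderiv ℝ (PsiR T L) x (EuclideanSpace.single ((0:Fin 2), a) (1:ℝ))) ^ 2 ≤
        2 * (X0 * X1) ^ 2 * (fderiv ℝ (Wf (-T) 0) u (EuclideanSpace.single a 1)) ^ 2 +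
        2 * (Phu * X1) ^ 2 * (fderiv ℝ (Wf (2 * Real.log L) (2 * Real.log L + 1)) (projL 0 x)
          (EuclideanSpace.single a 1)) ^ 2 := by
    intro a
    rw [fderiv_PsiR_apply hT]
    set A := fderiv ℝ (Wf (-T) 0) u (EuclideanSpace.single a 1)
    set Bb := fderiv ℝ (Wf (2 * Real.log L) (2 * Real.log L + 1)) (projL 0 x)
      (EuclideanSpace.single a 1)
    nlinarith [sq_nonneg (A * (X0 * X1) - Phu * (X1 * Bb))]
  have step3 : gradSqD 0 (psiC T L) x ≤
      2 * (X0 * X1) ^ 2 * gradSq (Wf (-T) 0) u +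
      2 * (Phu * X1) ^ 2 * gradSq (Wf (2 * Real.log L) (2 * Real.log L + 1)) (projL 0 x) := by
    rw [step1]
    calc ∑ a : Fin 2, (fderiv ℝ (PsiR T L) x (EuclideanSpace.single ((0:Fin 2), a) (1:ℝ))) ^ 2
        ≤ ∑ a : Fin 2,
          (2 * (X0 * X1) ^ 2 * (fderiv ℝ (Wf (-T) 0) u (EuclideanSpace.single a 1)) ^ 2 +
          2 * (Phu * X1) ^ 2 * (fderiv ℝ (Wf (2 * Real.log L) (2 * Real.log L + 1)) (projL 0 x)
            (EuclideanSpace.single a 1)) ^ 2) := Finset.sum_le_sum fun a _ => step2 a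
      _ = 2 * (X0 * X1) ^ 2 * gradSq (Wf (-T) 0) u +
          2 * (Phu * X1) ^ 2 * gradSq (Wf (2 * Real.log L) (2 * Real.log L + 1)) (projL 0 x) := by
          rw [Finset.sum_add_distrib, ← Finset.mul_sum, ← Finset.mul_sum]
          rfl
  apply le_trans step3
  have hM1 : gradSq (Wf (-T) 0) u ≤ majW (-T) 0 u := gradSq_Wf_le (hab1 hT) u
  have hM2 : gradSq (Wf (2 * Real.log L) (2 * Real.log L + 1)) (projL 0 x) ≤
      majW (2 * Real.log L) (2 * Real.log L + 1) (projL 0 x) := gradSq_Wf_le hab2' _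
  have hI1 : (X0 * X1) ^ 2 ≤ ballInd (Real.exp ((2 * Real.log L + 1) / 2)) (projL 1 x) := by
    have h1 : (X0 * X1) ^ 2 = X0 ^ 2 * X1 ^ 2 := by ring
    rw [h1]
    calc X0 ^ 2 * X1 ^ 2 ≤ 1 * X1 ^ 2 :=
          mul_le_mul_of_nonneg_right (Wf_sq_le_one _ _ _) (sq_nonneg _)
      _ = X1 ^ 2 := one_mul _
      _ ≤ _ := Wf_sq_le_ballInd hab2' _
  have hI2 : (Phu * X1) ^ 2 ≤ ballInd 1 (projL 1 x - projL 0 x) := by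
    have h1 : (Phu * X1) ^ 2 = Phu ^ 2 * X1 ^ 2 := by ring
    rw [h1]
    calc Phu ^ 2 * X1 ^ 2 ≤ Phu ^ 2 * 1 :=
          mul_le_mul_of_nonneg_left (Wf_sq_le_one _ _ _) (sq_nonneg _)
      _ = Phu ^ 2 := mul_one _
      _ ≤ ballInd (Real.exp (0 / 2)) u := Wf_sq_le_ballInd (hab1 hT) u
      _ = ballInd 1 u := by norm_num
      _ = ballInd 1 (projL 1 x - projL 0 x) := ballInd_symm 1 _ _
  have e1 : 2 * (X0 * X1) ^ 2 * gradSq (Wf (-T) 0) u ≤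
      2 * (majW (-T) 0 u * ballInd (Real.exp ((2 * Real.log L + 1) / 2)) (projL 1 x)) := by
    rw [mul_assoc]
    apply mul_le_mul_of_nonneg_left _ (by norm_num)
    rw [mul_comm ((X0 * X1) ^ 2)]
    exact mul_le_mul hM1 hI1 (sq_nonneg _) (majW_nonneg _ _ _)
  have e2 : 2 * (Phu * X1) ^ 2 * gradSq (Wf (2 * Real.log L) (2 * Real.log L + 1)) (projL 0 x) ≤
      2 * (majW (2 * Real.log L) (2 * Real.log L + 1) (projL 0 x) *
        ballInd 1 (projL 1 x - projL 0 x)) := by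
    rw [mul_assoc]
    apply mul_le_mul_of_nonneg_left _ (by norm_num)
    rw [mul_comm ((Phu * X1) ^ 2)]
    exact mul_le_mul hM2 hI2 (sq_nonneg _) (majW_nonneg _ _ _)
  exact add_le_add e1 e2

lemma gradSqD_nonneg (i : Fin 2) (f : D2 → ℂ) (x : D2) : 0 ≤ gradSqD i f x :=
  Finset.sum_nonneg fun _ _ => sq_nonneg _

lemma gradSqD_continuous {f : D2 → ℂ} (hf : ContDiff ℝ (⊤:ℕ∞) f) :
    Continuous (gradSqD 0 f) := by
  apply continuous_finset_sum
  intro a _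
  exact (((hf.continuous_fderiv (by simp)).clm_apply continuous_const).norm).pow 2

lemma gradSqD_hasCompactSupport {f : D2 → ℂ} (hf : HasCompactSupport f) :
    HasCompactSupport (gradSqD 0 f) := by
  have hfd : HasCompactSupport (fderiv ℝ f) := hf.fderiv ℝ
  have : gradSqD 0 f = (fun M : D2 →L[ℝ] ℂ =>
      ∑ a : Fin 2, ‖M (EuclideanSpace.single ((0:Fin 2), a) (1:ℝ))‖ ^ 2) ∘ (fderiv ℝ f) := rfl
  rw [this]
  apply hfd.comp_left
  simp

lemma integral_gradSqD_le (hT : 0 < T) (hL : 1 ≤ L) :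
    ∫ x : D2, gradSqD 0 (psiC T L) x ≤
      8 * cM ^ 2 * ((volume (ball (0:R2) 1)).toReal) ^ 2 * Real.exp 1 * L ^ 2 / T
        + 8 * cM ^ 2 * ((volume (ball (0:R2) 1)).toReal) ^ 2 := by
  set B := (volume (ball (0:R2) 1)).toReal with hB
  set a2 := 2 * Real.log L with ha2
  set b2 := 2 * Real.log L + 1 with hb2
  set RX := Real.exp (b2 / 2) with hRX
  have hL0 : (0:ℝ) < L := lt_of_lt_of_le one_pos hL
  have hint_maj1 : Integrable (majW (-T) 0) := majW_integrable (hab1 hT)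
  have hint_maj2 : Integrable (majW a2 b2) := majW_integrable hab2'
  have hint_b1 : Integrable (ballInd RX) := ballInd_integrable RX
  have hint_b2 : Integrable (ballInd 1) := ballInd_integrable 1
  set M2 : R2 × R2 → ℝ := fun z =>
    2 * (majW (-T) 0 (z.1 - z.2) * ballInd RX z.2) +
      2 * (majW a2 b2 z.1 * ballInd 1 (z.2 - z.1)) with hM2
  have hM2int : Integrable M2 :=
    ((shear1_integrable hint_maj1 hint_b1).const_mul 2).add
      ((shear2_integrable hint_b2 hint_maj2).const_mul 2)
  have hcomp : ∀ x : D2, gradSqD 0 (psiC T L) x ≤ M2 (unpackEquiv x) := by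
    intro x
    rw [unpackEquiv_apply]
    exact gradSqD_psiC_le hT x
  have hI : Integrable (fun x : D2 => M2 (unpackEquiv x)) :=
    (unpackEquiv_measurePreserving.integrable_comp_emb
      unpackEquiv.measurableEmbedding).2 hM2int
  have hG : Integrable (gradSqD 0 (psiC T L)) :=
    (gradSqD_continuous (psiC_contDiff hT)).integrable_of_hasCompactSupport
      (gradSqD_hasCompactSupport psiC_hasCompactSupport)
  have hRX2 : RX ^ 2 = Real.exp 1 * L ^ 2 := by
    rw [sq, ← Real.exp_add, hb2]
    rw [show (2 * Real.log L + 1) / 2 + (2 * Real.log L + 1) / 2 = Real.log L + Real.log L + 1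
      by ring]
    rw [Real.exp_add, Real.exp_add, Real.exp_log hL0]
    ring
  calc ∫ x : D2, gradSqD 0 (psiC T L) x
      ≤ ∫ x : D2, M2 (unpackEquiv x) := integral_mono hG hI hcomp
    _ = ∫ z : R2 × R2, M2 z :=
        unpackEquiv_measurePreserving.integral_comp unpackEquiv.measurableEmbedding M2
    _ = 2 * ((∫ x, majW (-T) 0 x) * ∫ x, ballInd RX x) +
        2 * ((∫ x, majW a2 b2 x) * ∫ x, ballInd 1 x) := by
        rw [hM2]
        rw [integral_add ((shear1_integrable hint_maj1 hint_b1).const_mul 2)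
          ((shear2_integrable hint_b2 hint_maj2).const_mul 2)]
        rw [MeasureTheory.integral_const_mul, MeasureTheory.integral_const_mul]
        rw [shear1_integral, shear2_integral]
    _ = 2 * (((2 * cM / (0 - -T)) ^ 2 * (B * (0 - -T))) * (RX ^ 2 * B)) +
        2 * (((2 * cM / (b2 - a2)) ^ 2 * (B * (b2 - a2))) * (1 ^ 2 * B)) := by
        rw [majW_integral (hab1 hT), majW_integral hab2',
          ballInd_integral (Real.exp_pos _).le, ballInd_integral zero_le_one]
    _ = 8 * cM ^ 2 * B ^ 2 * Real.exp 1 * L ^ 2 / T + 8 * cM ^ 2 * B ^ 2 := by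
        rw [hRX2]
        have hba : b2 - a2 = 1 := by rw [hb2, ha2]; ring
        rw [hba]
        have hT0 : T ≠ 0 := hT.ne'
        rw [show (0:ℝ) - -T = T by ring]
        field_simp
        ring

lemma integral_trace_ge (hT : 0 < T) (hL : 1 ≤ L) :
    L ^ 2 * (volume (ball (0:R2) 1)).toReal ≤ ∫ x : R2, ‖psiC T L (pack x x)‖ ^ 2 := by
  set B := (volume (ball (0:R2) 1)).toReal with hB
  set a2 := 2 * Real.log L with ha2
  set b2 := 2 * Real.log L + 1 with hb2
  have hL0 : (0:ℝ) < L := lt_of_lt_of_le one_pos hL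
  have hXval : ∀ x : R2, psiC T L (pack x x) =
      ((Wf a2 b2 x * Wf a2 b2 x : ℝ) : ℂ) := by
    intro x
    unfold psiC PsiR
    rw [projL_pack0, projL_pack1, sub_self]
    rw [Wf_eq_one (hab1 hT) (by simp [(Real.exp_pos (-T)).le])]
    rw [one_mul]
  have heq : (fun x : R2 => ‖psiC T L (pack x x)‖ ^ 2) =
      fun x => (Wf a2 b2 x * Wf a2 b2 x) ^ 2 := by
    funext x
    rw [hXval, Complex.norm_real, Real.norm_eq_abs, sq_abs]
  rw [heq]
  have hlow : ∀ x, ballInd L x ≤ (Wf a2 b2 x * Wf a2 b2 x) ^ 2 := by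
    intro x
    by_cases hx : x ∈ Metric.closedBall (0:R2) L
    · rw [ballInd, Set.indicator_of_mem hx]
      have hn : ‖x‖ ≤ L := by simpa [Metric.mem_closedBall, dist_zero_right] using hx
      have h2 : ‖x‖ ^ 2 ≤ Real.exp a2 := by
        rw [ha2, show (2:ℝ) * Real.log L = Real.log L + Real.log L by ring,
          Real.exp_add, Real.exp_log hL0]
        calc ‖x‖ ^ 2 ≤ L ^ 2 := pow_le_pow_left₀ (norm_nonneg _) hn 2
          _ = L * L := sq L
      rw [Wf_eq_one hab2' h2]
      norm_num
    · rw [ballInd, Set.indicator_of_notMem hx]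
      positivity
  have hXcont : Continuous (fun x : R2 => (Wf a2 b2 x * Wf a2 b2 x) ^ 2) :=
    (((Wf_contDiff hab2').continuous.mul (Wf_contDiff hab2').continuous).pow 2)
  have hXsupp : HasCompactSupport (fun x : R2 => (Wf a2 b2 x * Wf a2 b2 x) ^ 2) := by
    have : (fun x : R2 => (Wf a2 b2 x * Wf a2 b2 x) ^ 2) =
        (fun t : ℝ => (t * t) ^ 2) ∘ (Wf a2 b2) := rfl
    rw [this]
    exact (Wf_support hab2').comp_left (by norm_num)
  calc L ^ 2 * B = ∫ x, ballInd L x := (ballInd_integral hL0.le).symm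
    _ ≤ ∫ x, (Wf a2 b2 x * Wf a2 b2 x) ^ 2 :=
        integral_mono (ballInd_integrable L)
          (hXcont.integrable_of_hasCompactSupport hXsupp) hlow


/-- **Failure of the 2D endpoint trace estimate**: there is no constant `C` such that
`∫ |ψ(x,x)|² dx ≤ C ∫∫ |∇_{x₁}ψ|²` for all symmetric `ψ ∈ C_c^∞(ℝ²×ℝ²)`. -/
theorem stmt_7 :
    ¬ ∃ C : ℝ, ∀ ψ : D2 → ℂ, ContDiff ℝ (⊤ : ℕ∞) ψ → HasCompactSupport ψ →
      (∀ a b : R2, ψ (pack a b) = ψ (pack b a)) →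
      (∫ x : R2, ‖ψ (pack x x)‖ ^ 2) ≤ C * ∫ x : D2, gradSqD 0 ψ x := by
  rintro ⟨C, hC⟩
  set B := (volume (ball (0:R2) 1)).toReal with hB
  have hBpos : 0 < B := B_pos
  set C' := max C 1 with hC'
  have hC'1 : 1 ≤ C' := le_max_right _ _
  have hC'0 : 0 < C' := by linarith
  set T := 16 * Real.exp 1 * B * cM ^ 2 * C' with hT'
  have hT : 0 < T := by
    apply mul_pos (mul_pos (mul_pos (mul_pos (by norm_num) (Real.exp_pos 1)) hBpos)
      (pow_pos cM_pos 2)) hC'0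
  set L := max 1 (Real.sqrt (32 * B * cM ^ 2 * C')) with hL'
  have hL : 1 ≤ L := le_max_left _ _
  have hs0 : 0 ≤ 32 * B * cM ^ 2 * C' :=
    mul_nonneg (mul_nonneg (mul_nonneg (by norm_num) hBpos.le) (sq_nonneg cM)) hC'0.le
  have hL2 : 32 * B * cM ^ 2 * C' ≤ L ^ 2 := by
    calc 32 * B * cM ^ 2 * C' = (Real.sqrt (32 * B * cM ^ 2 * C')) ^ 2 :=
          (Real.sq_sqrt hs0).symm
      _ ≤ L ^ 2 := pow_le_pow_left₀ (Real.sqrt_nonneg _) (le_max_right _ _) 2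
  have key := hC (psiC T L) (psiC_contDiff hT) psiC_hasCompactSupport
    (fun a b => psiC_symm a b)
  have hgnn : 0 ≤ ∫ x : D2, gradSqD 0 (psiC T L) x :=
    integral_nonneg fun x => gradSqD_nonneg 0 _ x
  have key2 : (∫ x : R2, ‖psiC T L (pack x x)‖ ^ 2) ≤
      C' * ∫ x : D2, gradSqD 0 (psiC T L) x :=
    le_trans key (mul_le_mul_of_nonneg_right (le_max_left C 1) hgnn)
  have hlhs := integral_trace_ge hT hL
  have hrhs := integral_gradSqD_le hT hL
  have final : L ^ 2 * B ≤
      C' * (8 * cM ^ 2 * B ^ 2 * Real.exp 1 * L ^ 2 / T + 8 * cM ^ 2 * B ^ 2) :=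
    le_trans hlhs (le_trans key2 (mul_le_mul_of_nonneg_left hrhs hC'0.le))
  have hTe : C' * (8 * cM ^ 2 * B ^ 2 * Real.exp 1 * L ^ 2 / T) = B * L ^ 2 / 2 := by
    rw [hT']
    have h1 : Real.exp 1 ≠ 0 := (Real.exp_pos 1).ne'
    have h2 : B ≠ 0 := hBpos.ne'
    have h3 : cM ≠ 0 := cM_pos.ne'
    have h4 : C' ≠ 0 := hC'0.ne'
    field_simp
    ring
  have h8 : C' * (8 * cM ^ 2 * B ^ 2) ≤ B * L ^ 2 / 4 := by
    have h := mul_le_mul_of_nonneg_left hL2 (by linarith : (0:ℝ) ≤ B / 4)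
    calc C' * (8 * cM ^ 2 * B ^ 2) = B / 4 * (32 * B * cM ^ 2 * C') := by ring
      _ ≤ B / 4 * L ^ 2 := h
      _ = B * L ^ 2 / 4 := by ring
  have hLBpos : 0 < L ^ 2 * B := mul_pos (pow_pos (by linarith) 2) hBpos
  rw [mul_add, hTe] at final
  nlinarith [final, h8, hLBpos]
end Main
end
end

section
/- Let χ : ℝ² → ℝ be a smooth function with χ(−x) = χ(x), 0 ≤ χ ≤ 1, χ(x) = 1 for |x| ≤ 1/4, and χ(x) = 0 for |x| ≥ 1/2. For ε ∈ (0, 1/4) define ψ_ε(x₁,x₂) = χ(x₁−x₂) χ(x₁) χ(x₂) · ln(−ln(|x₁−x₂| + ε)). Then ψ_ε is a symmetric function on ℝ²×ℝ², and: (i) there exist c > 0 and ε₀ ∈ (0,1/4) such that ∫_{ℝ²} |ψ_ε(x,x)|² dx ≥ c · ln ln(1/ε) for all ε ∈ (0, ε₀); in particular ∫_{ℝ²} |ψ_ε(x,x)|² dx → ∞ as ε → 0; and (ii) sup_{ε ∈ (0,1/4)} ∫∫_{ℝ²×ℝ²} |∇_{x₁}ψ_ε(x₁,x₂)|² dx₁dx₂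 < ∞. -/
set_option maxHeartbeats 1000000

noncomputable section

open MeasureTheory

/-- The counterexample family `ψ_ε(x₁,x₂) = χ(x₁-x₂)χ(x₁)χ(x₂)·ln(−ln(|x₁−x₂|+ε))`. -/
def psiEps (χ : R2 → ℝ) (ε : ℝ) (x₁ x₂ : R2) : ℝ :=
  χ (x₁ - x₂) * χ x₁ * χ x₂ * Real.log (-Real.log (‖x₁ - x₂‖ + ε))

/-- `|∇_{x₁} ψ_ε|²` at `(x₁,x₂)`. -/
def gradSq1psi (χ : R2 → ℝ) (ε : ℝ) (x₁ x₂ : R2) : ℝ :=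
  ∑ a : Fin 2, (fderiv ℝ (fun y => psiEps χ ε y x₂) x₁ (EuclideanSpace.single a (1 : ℝ))) ^ 2

section Aux

open Real Set Metric Filter intervalIntegral

lemma ftc1 (ε : ℝ) (hε : 0 < ε) (hε4 : ε < 1/4) :
    ∫ r in (0:ℝ)..(1/2), ((r+ε) * Real.log (r+ε)^2)⁻¹ ≤ 4 := by
  have key : ∀ r ∈ uIcc (0:ℝ) (1/2), HasDerivAt (fun s => -(Real.log (s+ε))⁻¹)
      (((r+ε) * Real.log (r+ε)^2)⁻¹) r := by
    intro r hr
    rw [uIcc_of_le (by norm_num)] at hr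
    have hpos : 0 < r + ε := by linarith [hr.1]
    have hlt1 : r + ε < 1 := by linarith [hr.2]
    have hlogneg : Real.log (r+ε) < 0 := Real.log_neg hpos hlt1
    have h1 : HasDerivAt (fun s : ℝ => s + ε) 1 r := (hasDerivAt_id r).add_const ε
    have h2 : HasDerivAt (fun s : ℝ => Real.log (s+ε)) ((r+ε)⁻¹ * 1) r :=
      by have := (Real.hasDerivAt_log hpos.ne').comp r h1; exact this
    have h3 : HasDerivAt (fun s => -(Real.log (s+ε))⁻¹) _ r := (h2.inv hlogneg.ne).neg
    convert h3 using 1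
    field_simp
  have hcont : ContinuousOn (fun r : ℝ => ((r+ε) * Real.log (r+ε)^2)⁻¹) (uIcc (0:ℝ) (1/2)) := by
    rw [uIcc_of_le (by norm_num)]
    apply ContinuousOn.inv₀
    · exact (continuousOn_id.add continuousOn_const).mul
        (((continuousOn_id.add continuousOn_const).log (fun x hx => by
          simp only [Pi.add_apply, id]; intro h; nlinarith [hx.1])).pow 2)
    · intro r hr
      have hpos : 0 < r + ε := by linarith [hr.1]
      have hlt1 : r + ε < 1 := by linarith [hr.2]
      have hlogneg := Real.log_neg hpos hlt1
      exact mul_ne_zero hpos.ne' (pow_ne_zero 2 hlogneg.ne)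
  rw [integral_eq_sub_of_hasDerivAt key (hcont.intervalIntegrable), zero_add]
  have h34 : Real.log (1/2+ε) ≤ -(1/4) := by
    have : Real.log (1/2+ε) ≤ Real.log (3/4) := Real.log_le_log (by linarith) (by linarith)
    have h2 := Real.log_le_sub_one_of_pos (show (0:ℝ) < 3/4 by norm_num)
    linarith
  have hεlog : Real.log ε < 0 := Real.log_neg hε (by linarith)
  have hL : Real.log (1/2+ε) < 0 := by linarith
  have h1 : (Real.log ε)⁻¹ < 0 := inv_neg''.mpr hεlog
  have h2 : -(Real.log (1/2+ε))⁻¹ ≤ 4 := by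
    rw [← inv_neg]
    have h3 : (4:ℝ)⁻¹ ≤ -Real.log (1/2+ε) := by linarith
    calc (-Real.log (1/2+ε))⁻¹ ≤ ((4:ℝ)⁻¹)⁻¹ := inv_anti₀ (by norm_num) h3
      _ = 4 := by norm_num
  linarith

lemma rlogsq (ε r : ℝ) (hε : 0 < ε) (hε4 : ε < 1/4) (hr0 : 0 ≤ r) (hr2 : r ≤ 1/2) :
    r * Real.log (r+ε)^2 ≤ 16 := by
  rcases eq_or_lt_of_le hr0 with heq | hr
  · rw [← heq]
    norm_num
  have h1 : Real.log r ≤ Real.log (r+ε) := Real.log_le_log hr (by linarith)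
  have h2 : Real.log (r+ε) < 0 := Real.log_neg (by linarith) (by linarith)
  have hsq : Real.log (r+ε)^2 ≤ Real.log r ^ 2 := by nlinarith
  have h3 : Real.log (1/r) ≤ (1/r) ^ (2⁻¹:ℝ) / (2⁻¹:ℝ) := log_le_rpow_div (by positivity) (by norm_num)
  have h4 : Real.log r ^ 2 ≤ 4 / r := by
    have hlogr : Real.log (1/r) = -Real.log r := by rw [one_div, Real.log_inv]
    have h5 : ((1/r) ^ (2⁻¹:ℝ))^2 = 1/r := by
      rw [← Real.rpow_natCast ((1/r) ^ (2⁻¹:ℝ)) 2, ← Real.rpow_mul (by positivity)]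
      norm_num
    have h6 : 0 ≤ Real.log (1/r) := Real.log_nonneg (by rw [le_div_iff₀ hr]; linarith)
    have h7 : Real.log (1/r) ^ 2 ≤ (2 * (1/r) ^ (2⁻¹:ℝ))^2 :=
      pow_le_pow_left₀ h6 (by linarith [h3, (by ring : (1/r:ℝ)^((2:ℝ)⁻¹) / (2:ℝ)⁻¹ = 2 * (1/r)^((2:ℝ)⁻¹))]) 2
    have h8 : (2 * (1/r) ^ (2⁻¹:ℝ))^2 = 4 * (1/r) := by rw [mul_pow, h5]; norm_num
    have h9 : Real.log r ^2 = Real.log (1/r) ^ 2 := by rw [hlogr]; ring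
    rw [h9]
    rw [h8] at h7
    rw [mul_one_div] at h7; linarith
  calc r * Real.log (r+ε)^2 ≤ r * (4/r) := by
        refine mul_le_mul_of_nonneg_left (hsq.trans h4) hr.le
    _ ≤ 16 := by rw [mul_div_cancel₀ _ hr.ne']; norm_num

lemma abs_log_le (s : ℝ) (hs : 1/4 ≤ s) : |Real.log s| ≤ s + 3 := by
  rcases le_or_gt 1 s with h | h
  · rw [abs_of_nonneg (Real.log_nonneg h)]
    linarith [Real.log_le_sub_one_of_pos (by linarith : (0:ℝ) < s)]
  · have hs0 : 0 < s := by linarith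
    rw [abs_of_nonpos (Real.log_nonpos hs0.le h.le)]
    rw [← Real.log_inv]
    have h1 : s⁻¹ ≤ 4 := by
      rw [inv_le_comm₀ hs0 (by norm_num)]
      linarith
    linarith [Real.log_le_sub_one_of_pos (inv_pos.mpr hs0)]


lemma radial_bound (M ε : ℝ) (hM0 : 0 ≤ M) (hε : 0 < ε) (hε4 : ε < 1/4) :
    ∫ r in Ioi (0:ℝ), r * (if r ≤ 1/2 then
        32*M^2*(Real.log (r+ε))^2 + 288*M^2 + 4*((r+ε)^2*(Real.log (r+ε))^2)⁻¹ else 0)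
      ≤ 328*M^2 + 16 := by
  set g : ℝ → ℝ := fun r => r * (if r ≤ 1/2 then
      32*M^2*(Real.log (r+ε))^2 + 288*M^2 + 4*((r+ε)^2*(Real.log (r+ε))^2)⁻¹ else 0) with hg
  set f : ℝ → ℝ := fun r =>
      r * (32*M^2*(Real.log (r+ε))^2 + 288*M^2 + 4*((r+ε)^2*(Real.log (r+ε))^2)⁻¹) with hf
  have hne : ∀ r : ℝ, 0 ≤ r → r ≤ 1/2 → (r+ε)^2*(Real.log (r+ε))^2 ≠ 0 := by
    intro r h0 h2
    have hpos : 0 < r + ε := by linarith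
    have hlog : Real.log (r+ε) < 0 := Real.log_neg hpos (by linarith)
    exact mul_ne_zero (pow_ne_zero 2 hpos.ne') (pow_ne_zero 2 hlog.ne)
  have hcontf : ContinuousOn f (Icc (0:ℝ) (1/2)) := by
    rw [hf]
    apply continuousOn_id.mul
    apply ContinuousOn.add
    · apply ContinuousOn.add
      · exact (continuousOn_const.mul (((continuousOn_id.add continuousOn_const).log
          (fun r hr => by simp only [Pi.add_apply, id_eq]; intro h; nlinarith [hr.1])).pow 2))
      · exact continuousOn_const
    · refine continuousOn_const.mul (ContinuousOn.inv₀ ?_ ?_)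
      · exact ((continuousOn_id.add continuousOn_const).pow 2).mul
          (((continuousOn_id.add continuousOn_const).log
            (fun r hr => by simp only [Pi.add_apply, id_eq]; intro h; nlinarith [hr.1])).pow 2)
      · intro r hr
        simpa using hne r hr.1 hr.2
  have heqon : EqOn g f (Ioc (0:ℝ) (1/2)) := by
    intro r hr
    simp only [hg, hf, if_pos hr.2]
  have hint1 : IntegrableOn g (Ioc (0:ℝ) (1/2)) :=
    ((hcontf.integrableOn_compact isCompact_Icc).mono_set Ioc_subset_Icc_self).congr_fun
      (fun r hr => (heqon hr).symm) measurableSet_Ioc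
  have hzeroon : EqOn g (fun _ => (0:ℝ)) (Ioi (1/2:ℝ)) := by
    intro r hr
    simp only [hg, if_neg (not_le.mpr (show (1/2:ℝ) < r from hr)), mul_zero]
  have hint2 : IntegrableOn g (Ioi (1/2:ℝ)) :=
    (integrableOn_zero (ε' := ℝ)).congr_fun (fun r hr => (hzeroon hr).symm) measurableSet_Ioi
  have hunion : Ioc (0:ℝ) (1/2) ∪ Ioi (1/2:ℝ) = Ioi (0:ℝ) := Ioc_union_Ioi_eq_Ioi (by norm_num)
  have hsplit : ∫ r in Ioi (0:ℝ), g r =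
      (∫ r in Ioc (0:ℝ) (1/2), g r) + ∫ r in Ioi (1/2:ℝ), g r := by
    rw [← hunion, setIntegral_union (Ioc_disjoint_Ioi le_rfl) measurableSet_Ioi hint1 hint2]
  have hzero : ∫ r in Ioi (1/2:ℝ), g r = 0 := by
    rw [setIntegral_congr_fun measurableSet_Ioi hzeroon]
    exact integral_zero _ _
  have hmain : ∫ r in Ioc (0:ℝ) (1/2), g r ≤ 328*M^2 + 16 := by
    rw [setIntegral_congr_fun measurableSet_Ioc heqon, ← intervalIntegral.integral_of_le (by norm_num : (0:ℝ) ≤ 1/2)]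
    -- bound function
    set b : ℝ → ℝ := fun r => 656*M^2 + 4*((r+ε) * (Real.log (r+ε))^2)⁻¹ with hb
    have hcontb : ContinuousOn b (uIcc (0:ℝ) (1/2)) := by
      rw [uIcc_of_le (by norm_num), hb]
      refine continuousOn_const.add (continuousOn_const.mul (ContinuousOn.inv₀ ?_ ?_))
      · exact (continuousOn_id.add continuousOn_const).mul
          (((continuousOn_id.add continuousOn_const).log
            (fun r hr => by simp only [Pi.add_apply, id_eq]; intro h; nlinarith [hr.1])).pow 2)
      · intro r hr
        have hpos : 0 < r + ε := by linarith [hr.1]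
        have hlog : Real.log (r+ε) < 0 := Real.log_neg hpos (by linarith [hr.2])
        exact mul_ne_zero hpos.ne' (pow_ne_zero 2 hlog.ne)
    have hmono : ∀ r ∈ Icc (0:ℝ) (1/2), f r ≤ b r := by
      intro r hr
      have h0 := hr.1
      have h2 := hr.2
      have hpos : 0 < r + ε := by linarith
      have hlog : Real.log (r+ε) < 0 := Real.log_neg hpos (by linarith)
      have hb1 : r * (32*M^2*(Real.log (r+ε))^2) ≤ 512*M^2 := by
        have := rlogsq ε r hε hε4 h0 h2
        nlinarith [sq_nonneg M]
      have hb2 : r * (288*M^2) ≤ 144*M^2 := by nlinarith [sq_nonneg M]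
      have hb3 : r * (4*((r+ε)^2*(Real.log (r+ε))^2)⁻¹) ≤ 4*((r+ε) * (Real.log (r+ε))^2)⁻¹ := by
        have hkey : r * ((r+ε)^2)⁻¹ ≤ (r+ε)⁻¹ := by
          rw [← div_eq_mul_inv, inv_eq_one_div, div_le_div_iff₀ (by positivity) hpos]
          nlinarith
        have hl2 : (0:ℝ) ≤ ((Real.log (r+ε))^2)⁻¹ := by positivity
        calc r * (4*((r+ε)^2*(Real.log (r+ε))^2)⁻¹)
            = 4*((r * ((r+ε)^2)⁻¹) * ((Real.log (r+ε))^2)⁻¹) := by rw [mul_inv]; ring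
          _ ≤ 4*((r+ε)⁻¹ * ((Real.log (r+ε))^2)⁻¹) := by
              nlinarith [mul_le_mul_of_nonneg_right hkey hl2]
          _ = 4*((r+ε) * (Real.log (r+ε))^2)⁻¹ := by rw [mul_inv]
      calc f r = r * (32*M^2*(Real.log (r+ε))^2) + r * (288*M^2)
          + r * (4*((r+ε)^2*(Real.log (r+ε))^2)⁻¹) := by rw [hf]; ring
        _ ≤ 512*M^2 + 144*M^2 + 4*((r+ε) * (Real.log (r+ε))^2)⁻¹ := by
            linarith
        _ = b r := by rw [hb]; ring
    have hcontinv : ContinuousOn (fun r : ℝ => ((r+ε) * (Real.log (r+ε))^2)⁻¹) (uIcc (0:ℝ) (1/2)) := by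
      rw [uIcc_of_le (by norm_num)]
      refine ContinuousOn.inv₀ ?_ ?_
      · exact (continuousOn_id.add continuousOn_const).mul
          (((continuousOn_id.add continuousOn_const).log
            (fun r hr => by simp only [Pi.add_apply, id_eq]; intro h; nlinarith [hr.1])).pow 2)
      · intro r hr
        have hpos : 0 < r + ε := by linarith [hr.1]
        have hlog : Real.log (r+ε) < 0 := Real.log_neg hpos (by linarith [hr.2])
        exact mul_ne_zero hpos.ne' (pow_ne_zero 2 hlog.ne)
    have hintinv : IntervalIntegrable (fun r : ℝ => ((r+ε) * (Real.log (r+ε))^2)⁻¹) volume 0 (1/2) :=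
      hcontinv.intervalIntegrable
    have hintf : IntervalIntegrable f volume 0 (1/2) := by
      apply ContinuousOn.intervalIntegrable
      rw [uIcc_of_le (by norm_num : (0:ℝ) ≤ 1/2)]
      exact hcontf
    have hintb : IntervalIntegrable b volume 0 (1/2) := by
      rw [hb]
      exact intervalIntegrable_const.add (hintinv.const_mul 4)
    calc ∫ r in (0:ℝ)..(1/2), f r ≤ ∫ r in (0:ℝ)..(1/2), b r :=
          intervalIntegral.integral_mono_on (by norm_num) hintf hintb hmono
      _ = (∫ r in (0:ℝ)..(1/2), (656*M^2 : ℝ)) +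
          ∫ r in (0:ℝ)..(1/2), 4*((r+ε) * (Real.log (r+ε))^2)⁻¹ := by
          rw [hb, intervalIntegral.integral_add intervalIntegrable_const (hintinv.const_mul 4)]
      _ ≤ 328*M^2 + 16 := by
          rw [intervalIntegral.integral_const, intervalIntegral.integral_const_mul]
          have := ftc1 ε hε hε4
          simp only [smul_eq_mul]
          nlinarith [sq_nonneg M]
  linarith [hsplit, hzero, hmain]

lemma polar2 (f : ℝ → ℝ) :
    ∫ x : R2, f ‖x‖ = 2 * (volume (ball (0:R2) 1)).toReal * ∫ r in Ioi (0:ℝ), r * f r := by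
  rw [integral_fun_norm_addHaar (volume : Measure R2) f, measureReal_def]
  norm_num [finrank_euclideanSpace_fin, smul_eq_mul, MeasureTheory.integral_smul]
  ring

lemma grad_bound (χ : R2 → ℝ) (hχsmooth : ContDiff ℝ (⊤ : ℕ∞) χ)
    (hχ0 : ∀ x : R2, 0 ≤ χ x) (hχ1 : ∀ x : R2, χ x ≤ 1)
    (M : ℝ) (hM : ∀ x : R2, ‖fderiv ℝ χ x‖ ≤ M)
    (ε : ℝ) (hε : 0 < ε) (hε4 : ε < 1/4) (x₁ x₂ : R2)
    (hne : x₁ ≠ x₂) (hr2 : ‖x₁ - x₂‖ ≤ 1/2) :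
    gradSq1psi χ ε x₁ x₂ ≤
      32*M^2*(Real.log (‖x₁-x₂‖+ε))^2 + 288*M^2 +
        4*((‖x₁-x₂‖+ε)^2 * (Real.log (‖x₁-x₂‖+ε))^2)⁻¹ := by
  have hsub_ne : x₁ - x₂ ≠ 0 := sub_ne_zero.2 hne
  have hr0 : 0 < ‖x₁ - x₂‖ := norm_pos_iff.mpr hsub_ne
  have ht0 : 0 < ‖x₁ - x₂‖ + ε := by linarith
  have ht34 : ‖x₁ - x₂‖ + ε ≤ 3/4 := by linarith
  have hlogt : Real.log (‖x₁ - x₂‖ + ε) < 0 := Real.log_neg ht0 (by linarith)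
  have hs14 : 1/4 ≤ -Real.log (‖x₁ - x₂‖ + ε) := by
    have h1 : Real.log (‖x₁ - x₂‖ + ε) ≤ Real.log (3/4) := Real.log_le_log ht0 ht34
    have h2 := Real.log_le_sub_one_of_pos (show (0:ℝ) < 3/4 by norm_num)
    linarith
  have hdiff := hχsmooth.differentiable (by simp)
  -- derivative of A
  have hsubd : HasFDerivAt (fun y : R2 => y - x₂) (ContinuousLinearMap.id ℝ R2) x₁ :=
    (hasFDerivAt_id x₁).sub_const x₂
  have h1 : HasFDerivAt (fun y : R2 => χ (y - x₂))
      ((fderiv ℝ χ (x₁ - x₂)).comp (ContinuousLinearMap.id ℝ R2)) x₁ :=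
    ((hdiff (x₁ - x₂)).hasFDerivAt).comp x₁ hsubd
  have h2 : HasFDerivAt χ (fderiv ℝ χ x₁) x₁ := (hdiff x₁).hasFDerivAt
  have hA := (h1.mul h2).mul_const (χ x₂)
  -- derivative of the norm part
  have hnormd : DifferentiableAt ℝ (fun y : R2 => ‖y - x₂‖) x₁ :=
    DifferentiableAt.norm ℝ (differentiableAt_id.sub_const x₂) hsub_ne
  have hlip : LipschitzWith 1 (fun y : R2 => ‖y - x₂‖) := by
    refine LipschitzWith.of_dist_le_mul fun y z => ?_
    rw [Real.dist_eq, dist_eq_norm]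
    simp only [NNReal.coe_one, one_mul]
    have : (y - x₂) - (z - x₂) = y - z := by abel
    calc |‖y - x₂‖ - ‖z - x₂‖| ≤ ‖(y - x₂) - (z - x₂)‖ := abs_norm_sub_norm_le _ _
      _ = ‖y - z‖ := by rw [this]
  have hDn : ‖fderiv ℝ (fun y : R2 => ‖y - x₂‖) x₁‖ ≤ 1 := by
    simpa using norm_fderiv_le_of_lipschitz ℝ hlip (x₀ := x₁)
  have hm : HasFDerivAt (fun y : R2 => ‖y - x₂‖ + ε)
      (fderiv ℝ (fun y : R2 => ‖y - x₂‖) x₁) x₁ := hnormd.hasFDerivAt.add_const ε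
  have hlog1 : HasDerivAt (fun s : ℝ => -Real.log s) (-(‖x₁ - x₂‖ + ε)⁻¹) (‖x₁ - x₂‖ + ε) :=
    (Real.hasDerivAt_log ht0.ne').neg
  have hlog2 : HasDerivAt Real.log (-Real.log (‖x₁ - x₂‖ + ε))⁻¹ (-Real.log (‖x₁ - x₂‖ + ε)) :=
    Real.hasDerivAt_log (by linarith)
  have hL : HasDerivAt (fun s : ℝ => Real.log (-Real.log s))
      ((-Real.log (‖x₁ - x₂‖ + ε))⁻¹ * -(‖x₁ - x₂‖ + ε)⁻¹) (‖x₁ - x₂‖ + ε) :=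
    by have := HasDerivAt.comp (‖x₁ - x₂‖ + ε) hlog2 hlog1; exact this
  have hG : HasFDerivAt (fun y : R2 => Real.log (-Real.log (‖y - x₂‖ + ε)))
      (((-Real.log (‖x₁ - x₂‖ + ε))⁻¹ * -(‖x₁ - x₂‖ + ε)⁻¹) •
        fderiv ℝ (fun y : R2 => ‖y - x₂‖) x₁) x₁ := by have := hL.comp_hasFDerivAt x₁ hm; exact this
  have hF := hA.mul hG
  have hD : fderiv ℝ (fun y => psiEps χ ε y x₂) x₁ =
      (χ (x₁ - x₂) * χ x₁ * χ x₂) •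
          (((-Real.log (‖x₁ - x₂‖ + ε))⁻¹ * -(‖x₁ - x₂‖ + ε)⁻¹) •
            fderiv ℝ (fun y : R2 => ‖y - x₂‖) x₁) +
        Real.log (-Real.log (‖x₁ - x₂‖ + ε)) •
          ((χ x₂) • (χ (x₁ - x₂) • fderiv ℝ χ x₁ +
            χ x₁ • ((fderiv ℝ χ (x₁ - x₂)).comp (ContinuousLinearMap.id ℝ R2)))) := by
    exact hF.fderiv
  have hM0 : 0 ≤ M := le_trans (norm_nonneg _) (hM 0)
  have hA01 : 0 ≤ χ (x₁ - x₂) * χ x₁ * χ x₂ ∧ χ (x₁ - x₂) * χ x₁ * χ x₂ ≤ 1 := by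
    constructor
    · exact mul_nonneg (mul_nonneg (hχ0 _) (hχ0 _)) (hχ0 _)
    · exact mul_le_one₀ (mul_le_one₀ (hχ1 _) (hχ0 _) (hχ1 _)) (hχ0 _) (hχ1 _)
  have hsne : (0:ℝ) < -Real.log (‖x₁ - x₂‖ + ε) := by linarith
  have hcabs : |(-Real.log (‖x₁ - x₂‖ + ε))⁻¹ * -(‖x₁ - x₂‖ + ε)⁻¹| =
      ((‖x₁ - x₂‖ + ε) * (-Real.log (‖x₁ - x₂‖ + ε)))⁻¹ := by
    rw [abs_mul, abs_neg, abs_inv, abs_inv, abs_of_pos hsne, abs_of_pos ht0, ← mul_inv]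
    ring_nf
  have hnormD : ‖fderiv ℝ (fun y => psiEps χ ε y x₂) x₁‖ ≤
      ((‖x₁ - x₂‖ + ε) * (-Real.log (‖x₁ - x₂‖ + ε)))⁻¹ +
        2*M*(-Real.log (‖x₁ - x₂‖ + ε) + 3) := by
    rw [hD]
    refine le_trans (norm_add_le _ _) (add_le_add ?_ ?_)
    · rw [norm_smul, norm_smul, Real.norm_eq_abs, Real.norm_eq_abs, hcabs]
      calc |χ (x₁ - x₂) * χ x₁ * χ x₂| *
            (((‖x₁ - x₂‖ + ε) * (-Real.log (‖x₁ - x₂‖ + ε)))⁻¹ *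
              ‖fderiv ℝ (fun y : R2 => ‖y - x₂‖) x₁‖)
          ≤ 1 * (((‖x₁ - x₂‖ + ε) * (-Real.log (‖x₁ - x₂‖ + ε)))⁻¹ * 1) := by
            apply mul_le_mul
            · rw [abs_of_nonneg hA01.1]; exact hA01.2
            · exact mul_le_mul_of_nonneg_left hDn (by positivity)
            · positivity
            · norm_num
        _ = ((‖x₁ - x₂‖ + ε) * (-Real.log (‖x₁ - x₂‖ + ε)))⁻¹ := by ring
    · rw [norm_smul, norm_smul, Real.norm_eq_abs, Real.norm_eq_abs]
      have habsL : |Real.log (-Real.log (‖x₁ - x₂‖ + ε))| ≤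
          -Real.log (‖x₁ - x₂‖ + ε) + 3 := abs_log_le _ hs14
      have hsum2 : ‖χ (x₁ - x₂) • fderiv ℝ χ x₁ +
          χ x₁ • (fderiv ℝ χ (x₁ - x₂)).comp (ContinuousLinearMap.id ℝ R2)‖ ≤ 2 * M := by
        refine le_trans (norm_add_le _ _) ?_
        have hb1 : ‖χ (x₁ - x₂) • fderiv ℝ χ x₁‖ ≤ M := by
          rw [norm_smul, Real.norm_eq_abs, abs_of_nonneg (hχ0 _)]
          calc χ (x₁ - x₂) * ‖fderiv ℝ χ x₁‖ ≤ 1 * M :=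
            mul_le_mul (hχ1 _) (hM _) (norm_nonneg _) (by norm_num)
            _ = M := one_mul M
        have hb2 : ‖χ x₁ • (fderiv ℝ χ (x₁ - x₂)).comp (ContinuousLinearMap.id ℝ R2)‖ ≤ M := by
          rw [norm_smul (χ x₁) ((fderiv ℝ χ (x₁ - x₂)).comp (ContinuousLinearMap.id ℝ R2)),
            Real.norm_eq_abs, abs_of_nonneg (hχ0 _)]
          have hcomp : ‖(fderiv ℝ χ (x₁ - x₂)).comp (ContinuousLinearMap.id ℝ R2)‖ ≤ M := by
            refine le_trans (ContinuousLinearMap.opNorm_comp_le _ _) ?_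
            calc ‖fderiv ℝ χ (x₁ - x₂)‖ * ‖ContinuousLinearMap.id ℝ R2‖ ≤ M * 1 :=
              mul_le_mul (hM _) ContinuousLinearMap.norm_id_le (norm_nonneg _) hM0
              _ = M := mul_one M
          calc χ x₁ * ‖(fderiv ℝ χ (x₁ - x₂)).comp (ContinuousLinearMap.id ℝ R2)‖ ≤ 1 * M :=
            mul_le_mul (hχ1 _) hcomp (norm_nonneg _) (by norm_num)
            _ = M := one_mul M
        linarith
      calc |Real.log (-Real.log (‖x₁ - x₂‖ + ε))| * (|χ x₂| * ‖_root_.id (χ (x₁ - x₂) • fderiv ℝ χ x₁ +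
            χ x₁ • (fderiv ℝ χ (x₁ - x₂)).comp (ContinuousLinearMap.id ℝ R2))‖)
          ≤ (-Real.log (‖x₁ - x₂‖ + ε) + 3) * (1 * (2*M)) := by
            apply mul_le_mul habsL
            · apply mul_le_mul _ hsum2 (norm_nonneg _) (by norm_num)
              rw [abs_of_nonneg (hχ0 _)]; exact hχ1 _
            · positivity
            · linarith
        _ = 2*M*(-Real.log (‖x₁ - x₂‖ + ε) + 3) := by ring
  have hkey : ∀ a : Fin 2, (fderiv ℝ (fun y => psiEps χ ε y x₂) x₁
      (EuclideanSpace.single a (1:ℝ)))^2 ≤ ‖fderiv ℝ (fun y => psiEps χ ε y x₂) x₁‖^2 := by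
    intro a
    have h := (fderiv ℝ (fun y => psiEps χ ε y x₂) x₁).le_opNorm (EuclideanSpace.single a (1:ℝ))
    rw [EuclideanSpace.norm_single, norm_one, mul_one, Real.norm_eq_abs] at h
    calc (fderiv ℝ (fun y => psiEps χ ε y x₂) x₁ (EuclideanSpace.single a (1:ℝ)))^2
        = |fderiv ℝ (fun y => psiEps χ ε y x₂) x₁ (EuclideanSpace.single a (1:ℝ))|^2 := (sq_abs _).symm
      _ ≤ ‖fderiv ℝ (fun y => psiEps χ ε y x₂) x₁‖^2 :=
          pow_le_pow_left₀ (abs_nonneg _) h 2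
  have hsum : gradSq1psi χ ε x₁ x₂ ≤ 2 * ‖fderiv ℝ (fun y => psiEps χ ε y x₂) x₁‖^2 := by
    unfold gradSq1psi
    rw [Fin.sum_univ_two]
    linarith [hkey 0, hkey 1]
  refine le_trans hsum ?_
  have hainv : 0 ≤ ((‖x₁ - x₂‖ + ε) * (-Real.log (‖x₁ - x₂‖ + ε)))⁻¹ := by positivity
  have hbpos : 0 ≤ 2*M*(-Real.log (‖x₁ - x₂‖ + ε) + 3) := by positivity
  have hsq : ‖fderiv ℝ (fun y => psiEps χ ε y x₂) x₁‖^2 ≤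
      (((‖x₁ - x₂‖ + ε) * (-Real.log (‖x₁ - x₂‖ + ε)))⁻¹ +
        2*M*(-Real.log (‖x₁ - x₂‖ + ε) + 3))^2 :=
    pow_le_pow_left₀ (norm_nonneg _) hnormD 2
  have hinv2 : (((‖x₁ - x₂‖ + ε) * (-Real.log (‖x₁ - x₂‖ + ε)))⁻¹)^2 =
      ((‖x₁ - x₂‖ + ε)^2 * (Real.log (‖x₁ - x₂‖ + ε))^2)⁻¹ := by
    rw [inv_pow, mul_pow, neg_sq]
  have hfin : 2 * ((((‖x₁ - x₂‖ + ε) * (-Real.log (‖x₁ - x₂‖ + ε)))⁻¹) +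
      2*M*(-Real.log (‖x₁ - x₂‖ + ε) + 3))^2 ≤
      32*M^2*(Real.log (‖x₁-x₂‖+ε))^2 + 288*M^2 +
        4*((‖x₁-x₂‖+ε)^2 * (Real.log (‖x₁-x₂‖+ε))^2)⁻¹ := by
    rw [← hinv2]
    nlinarith [sq_nonneg ((((‖x₁ - x₂‖ + ε) * (-Real.log (‖x₁ - x₂‖ + ε)))⁻¹) -
        2*M*(-Real.log (‖x₁ - x₂‖ + ε) + 3)),
      mul_nonneg (sq_nonneg M) (sq_nonneg (-Real.log (‖x₁ - x₂‖ + ε) - 3))]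
  linarith [hsum, mul_le_mul_of_nonneg_left hsq (by norm_num : (0:ℝ) ≤ 2)]

lemma gradSq_zero_of_eventually (χ : R2 → ℝ) (ε : ℝ) (x₁ x₂ : R2)
    (h : ∀ᶠ y in nhds x₁, psiEps χ ε y x₂ = 0) : gradSq1psi χ ε x₁ x₂ = 0 := by
  have heq : (fun y => psiEps χ ε y x₂) =ᶠ[nhds x₁] (fun _ => (0:ℝ)) := h
  have h0 : fderiv ℝ (fun y => psiEps χ ε y x₂) x₁ = 0 := by
    rw [heq.fderiv_eq]
    exact fderiv_const_apply 0
  unfold gradSq1psi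
  rw [h0]
  simp

end Aux

/-- **Counterexample to the endpoint trace estimate**: for a radial cutoff `χ`, the family
`ψ_ε` is symmetric, its trace `L²` norm on the diagonal blows up like `ln ln (1/ε)`
(in particular it tends to `∞` as `ε → 0⁺`), while `‖∇_{x₁}ψ_ε‖_{L²}` stays bounded. -/
theorem stmt_8 (χ : R2 → ℝ) (hχsmooth : ContDiff ℝ (⊤ : ℕ∞) χ)
    (hχeven : ∀ x : R2, χ (-x) = χ x)
    (hχ0 : ∀ x : R2, 0 ≤ χ x) (hχ1 : ∀ x : R2, χ x ≤ 1)
    (hχin : ∀ x : R2, ‖x‖ ≤ 1 / 4 → χ x = 1)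
    (hχout : ∀ x : R2, 1 / 2 ≤ ‖x‖ → χ x = 0) :
    (∀ ε : ℝ, 0 < ε → ε < 1 / 4 → ∀ x₁ x₂ : R2, psiEps χ ε x₁ x₂ = psiEps χ ε x₂ x₁) ∧
    (∃ c : ℝ, 0 < c ∧ ∃ ε₀ : ℝ, 0 < ε₀ ∧ ε₀ < 1 / 4 ∧
      ∀ ε : ℝ, 0 < ε → ε < ε₀ →
        c * Real.log (Real.log (1 / ε)) ≤ ∫ x : R2, (psiEps χ ε x x) ^ 2) ∧
    Filter.Tendsto (fun ε : ℝ => ∫ x : R2, (psiEps χ ε x x) ^ 2)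
      (nhdsWithin 0 (Set.Ioi 0)) Filter.atTop ∧
    (∃ B : ℝ, ∀ ε : ℝ, 0 < ε → ε < 1 / 4 →
      (∫ x₁ : R2, ∫ x₂ : R2, gradSq1psi χ ε x₁ x₂) ≤ B) := by
  have hχcont : Continuous χ := hχsmooth.continuous
  have hχcs : HasCompactSupport χ := by
    apply HasCompactSupport.intro (isCompact_closedBall (0:R2) (1/2))
    intro x hx
    apply hχout x
    have : ¬ ‖x‖ ≤ 1/2 := by simpa [Metric.mem_closedBall, dist_zero_right] using hx
    linarith [not_le.mp this]
  -- diagonal values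
  have hχzero1 : χ (0 : R2) = 1 := hχin 0 (by simp)
  have hdiag : ∀ (ε : ℝ) (x : R2), psiEps χ ε x x = χ x ^ 2 * Real.log (-Real.log ε) := by
    intro ε x
    unfold psiEps
    rw [sub_self, norm_zero, zero_add, hχzero1]
    ring
  have hI : ∀ ε : ℝ, ∫ x : R2, (psiEps χ ε x x) ^ 2
      = (∫ x : R2, χ x ^ 4) * (Real.log (-Real.log ε)) ^ 2 := by
    intro ε
    have h : (fun x : R2 => (psiEps χ ε x x) ^ 2)
        = fun x => χ x ^ 4 * (Real.log (-Real.log ε)) ^ 2 := by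
      funext x
      rw [hdiag]
      ring
    rw [h, integral_mul_const]
  -- positivity of ∫ χ⁴
  have hχ4cs : HasCompactSupport (fun x : R2 => χ x ^ 4) := by
    apply HasCompactSupport.intro (isCompact_closedBall (0:R2) (1/2))
    intro x hx
    have : ¬ ‖x‖ ≤ 1/2 := by simpa [Metric.mem_closedBall, dist_zero_right] using hx
    rw [hχout x (by linarith [not_le.mp this])]
    norm_num
  have hχ4int : Integrable (fun x : R2 => χ x ^ 4) :=
    (hχcont.pow 4).integrable_of_hasCompactSupport hχ4cs
  have hc4pos : 0 < ∫ x : R2, χ x ^ 4 := by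
    have hindint : Integrable ((Metric.closedBall (0:R2) (1/4)).indicator (fun _ => (1:ℝ))) :=
      (integrable_indicator_iff measurableSet_closedBall).mpr
        (integrableOn_const measure_closedBall_lt_top.ne)
    have hind : ∫ x : R2, (Metric.closedBall (0:R2) (1/4)).indicator (fun _ => (1:ℝ)) x
        ≤ ∫ x : R2, χ x ^ 4 := by
      apply integral_mono hindint hχ4int
      intro x
      by_cases hx : x ∈ Metric.closedBall (0:R2) (1/4)
      · rw [Set.indicator_of_mem hx]
        have hx4 : χ x = 1 := hχin x (by simpa [Metric.mem_closedBall, dist_zero_right] using hx)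
        show (1:ℝ) ≤ χ x ^ 4
        rw [hx4]
        norm_num
      · rw [Set.indicator_of_notMem hx]
        positivity
    rw [integral_indicator_const _ measurableSet_closedBall, smul_eq_mul, mul_one, measureReal_def] at hind
    have hpos : 0 < (volume (Metric.closedBall (0:R2) (1/4))).toReal :=
      ENNReal.toReal_pos (Metric.measure_closedBall_pos volume 0 (by norm_num)).ne'
        measure_closedBall_lt_top.ne
    linarith
  refine ⟨?_, ?_, ?_, ?_⟩
  · -- symmetry
    intro ε _ _ x₁ x₂
    unfold psiEps
    rw [norm_sub_rev]
    have h : χ (x₁ - x₂) = χ (x₂ - x₁) := by rw [← neg_sub x₂ x₁, hχeven]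
    rw [h]
    ring
  · -- lower bound
    refine ⟨∫ x : R2, χ x ^ 4, hc4pos, 1/16, by norm_num, by norm_num, ?_⟩
    intro ε hε hεlt
    rw [hI ε]
    have hlog1 : Real.log (1/ε) = -Real.log ε := by rw [one_div, Real.log_inv]
    rw [hlog1]
    have hL1 : 1 ≤ Real.log (-Real.log ε) := by
      have h16 : (16:ℝ) ≤ ε⁻¹ := by
        have := inv_anti₀ hε hεlt.le
        norm_num at this
        linarith
      have hloge : Real.log 16 ≤ Real.log ε⁻¹ := Real.log_le_log (by norm_num) h16
      have hlog16 : Real.log 16 = 4 * Real.log 2 := by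
        rw [show (16:ℝ) = 2^(4:ℕ) by norm_num, Real.log_pow]
        push_cast
        ring
      have hl2 := Real.log_two_gt_d9
      have he1 := Real.exp_one_lt_d9
      have h5 : Real.exp 1 ≤ -Real.log ε := by
        rw [← Real.log_inv]
        rw [hlog16] at hloge
        linarith
      calc (1:ℝ) = Real.log (Real.exp 1) := (Real.log_exp 1).symm
        _ ≤ Real.log (-Real.log ε) := Real.log_le_log (Real.exp_pos 1) h5
    have hLsq : Real.log (-Real.log ε) ≤ (Real.log (-Real.log ε))^2 := by nlinarith
    exact mul_le_mul_of_nonneg_left hLsq hc4pos.le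
  · -- tendsto
    have hfun : (fun ε : ℝ => ∫ x : R2, (psiEps χ ε x x) ^ 2)
        = fun ε => (∫ x : R2, χ x ^ 4) * (Real.log (-Real.log ε)) ^ 2 := funext hI
    rw [hfun]
    have h1 : Filter.Tendsto (fun ε : ℝ => -Real.log ε) (nhdsWithin 0 (Set.Ioi 0)) Filter.atTop :=
      Filter.tendsto_neg_atBot_atTop.comp Real.tendsto_log_nhdsGT_zero
    have h2 : Filter.Tendsto (fun ε : ℝ => Real.log (-Real.log ε))
        (nhdsWithin 0 (Set.Ioi 0)) Filter.atTop := Real.tendsto_log_atTop.comp h1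
    have h3 : Filter.Tendsto (fun ε : ℝ => (Real.log (-Real.log ε)) ^ 2)
        (nhdsWithin 0 (Set.Ioi 0)) Filter.atTop := by
      have := h2.atTop_mul_atTop₀ h2
      simpa [pow_two] using this
    exact h3.const_mul_atTop hc4pos
  · -- gradient bound
    obtain ⟨M, hM⟩ := (hχcs.fderiv (𝕜 := ℝ)).exists_bound_of_continuous
      (hχsmooth.continuous_fderiv (by simp))
    have hM0 : 0 ≤ M := le_trans (norm_nonneg _) (hM 0)
    have hc₁0 : 0 ≤ (volume (Metric.ball (0:R2) 1)).toReal := ENNReal.toReal_nonneg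
    refine ⟨2 * (volume (Metric.ball (0:R2) 1)).toReal * (328*M^2+16)
      * (volume (Metric.closedBall (0:R2) (1/2))).toReal, ?_⟩
    intro ε hε hε4
    have hgrad0 : ∀ x₁ x₂ : R2, 0 ≤ gradSq1psi χ ε x₁ x₂ := fun x₁ x₂ =>
      Finset.sum_nonneg fun _ _ => sq_nonneg _
    -- vanishing cases
    have hzero_out : ∀ x₁ x₂ : R2, 1/2 < ‖x₁‖ → gradSq1psi χ ε x₁ x₂ = 0 := by
      intro x₁ x₂ h
      apply gradSq_zero_of_eventually
      have hopen : ∀ᶠ y : R2 in nhds x₁, 1/2 < ‖y‖ :=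
        (isOpen_lt continuous_const continuous_norm).eventually_mem h
      filter_upwards [hopen] with y hy
      unfold psiEps
      rw [hχout y hy.le]
      ring
    have hzero_far : ∀ x₁ x₂ : R2, 1/2 < ‖x₁ - x₂‖ → gradSq1psi χ ε x₁ x₂ = 0 := by
      intro x₁ x₂ h
      apply gradSq_zero_of_eventually
      have hopen : ∀ᶠ y : R2 in nhds x₁, 1/2 < ‖y - x₂‖ :=
        (isOpen_lt continuous_const ((continuous_id.sub continuous_const).norm)).eventually_mem h
      filter_upwards [hopen] with y hy
      unfold psiEps
      rw [hχout (y - x₂) hy.le]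
      ring
    -- inner integral bound
    have hinner : ∀ x₁ : R2, ∫ x₂ : R2, gradSq1psi χ ε x₁ x₂
        ≤ 2 * (volume (Metric.ball (0:R2) 1)).toReal * (328*M^2+16) := by
      intro x₁
      set f₁ : R2 → ℝ := fun x₂ => 32*M^2*(Real.log (‖x₁-x₂‖+ε))^2 + 288*M^2
          + 4*((‖x₁-x₂‖+ε)^2*(Real.log (‖x₁-x₂‖+ε))^2)⁻¹ with hf₁
      have hrmem : ∀ x₂ ∈ Metric.closedBall x₁ (1/2), ‖x₁ - x₂‖ ≤ 1/2 := by
        intro x₂ hx₂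
        rw [Metric.mem_closedBall] at hx₂
        rw [← dist_eq_norm, dist_comm]
        exact hx₂
      have hn : Continuous (fun x₂ : R2 => ‖x₁ - x₂‖ + ε) :=
        ((continuous_const.sub continuous_id).norm).add continuous_const
      have hnpos : ∀ x₂ ∈ Metric.closedBall x₁ (1/2), (0:ℝ) < ‖x₁ - x₂‖ + ε := by
        intro x₂ _
        have := norm_nonneg (x₁ - x₂)
        linarith
      have hlogneg : ∀ x₂ ∈ Metric.closedBall x₁ (1/2), Real.log (‖x₁ - x₂‖ + ε) < 0 := by
        intro x₂ hx₂
        exact Real.log_neg (hnpos x₂ hx₂) (by linarith [hrmem x₂ hx₂])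
      have hcontOn : ContinuousOn f₁ (Metric.closedBall x₁ (1/2)) := by
        rw [hf₁]
        have hlogcont : ContinuousOn (fun x₂ : R2 => Real.log (‖x₁ - x₂‖ + ε))
            (Metric.closedBall x₁ (1/2)) :=
          ContinuousOn.log hn.continuousOn (fun x₂ hx₂ => (hnpos x₂ hx₂).ne')
        refine ContinuousOn.add (ContinuousOn.add
          (continuousOn_const.mul (hlogcont.pow 2)) continuousOn_const)
          (continuousOn_const.mul (ContinuousOn.inv₀
            ((hn.continuousOn.pow 2).mul (hlogcont.pow 2)) ?_))
        intro x₂ hx₂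
        exact mul_ne_zero (pow_ne_zero 2 (hnpos x₂ hx₂).ne')
          (pow_ne_zero 2 (hlogneg x₂ hx₂).ne)
      have hIntOn : IntegrableOn f₁ (Metric.closedBall x₁ (1/2)) :=
        hcontOn.integrableOn_compact (isCompact_closedBall _ _)
      have hGint : Integrable ((Metric.closedBall x₁ (1/2)).indicator f₁) :=
        (integrable_indicator_iff measurableSet_closedBall).mpr hIntOn
      have hle : ∀ᵐ x₂ : R2, gradSq1psi χ ε x₁ x₂
          ≤ (Metric.closedBall x₁ (1/2)).indicator f₁ x₂ := by
        filter_upwards [compl_mem_ae_iff.mpr (measure_singleton x₁)] with x₂ hx₂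
        have hne12 : x₁ ≠ x₂ := fun h => hx₂ (by rw [Set.mem_singleton_iff, h])
        by_cases hcase : ‖x₁ - x₂‖ ≤ 1/2
        · rw [Set.indicator_of_mem (show x₂ ∈ Metric.closedBall x₁ (1/2) by
            rw [Metric.mem_closedBall, dist_comm, dist_eq_norm]; exact hcase)]
          exact grad_bound χ hχsmooth hχ0 hχ1 M hM ε hε hε4 x₁ x₂ hne12 hcase
        · rw [Set.indicator_of_notMem (show x₂ ∉ Metric.closedBall x₁ (1/2) by
            rw [Metric.mem_closedBall, dist_comm, dist_eq_norm]; exact hcase)]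
          rw [hzero_far x₁ x₂ (not_le.mp hcase)]
      have h1 : ∫ x₂ : R2, gradSq1psi χ ε x₁ x₂
          ≤ ∫ x₂ : R2, (Metric.closedBall x₁ (1/2)).indicator f₁ x₂ :=
        integral_mono_of_nonneg (Filter.Eventually.of_forall (hgrad0 x₁)) hGint hle
      have h2 : (fun x₂ : R2 => (Metric.closedBall x₁ (1/2)).indicator f₁ x₂)
          = fun x₂ : R2 => (fun r : ℝ => if r ≤ 1/2 then 32*M^2*(Real.log (r+ε))^2 + 288*M^2
              + 4*((r+ε)^2*(Real.log (r+ε))^2)⁻¹ else 0) ‖x₁ - x₂‖ := by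
        funext x₂
        by_cases hcase : ‖x₁ - x₂‖ ≤ 1/2
        · rw [Set.indicator_of_mem (show x₂ ∈ Metric.closedBall x₁ (1/2) by
            rw [Metric.mem_closedBall, dist_comm, dist_eq_norm]; exact hcase)]
          simp only [if_pos hcase, hf₁]
        · rw [Set.indicator_of_notMem (show x₂ ∉ Metric.closedBall x₁ (1/2) by
            rw [Metric.mem_closedBall, dist_comm, dist_eq_norm]; exact hcase)]
          simp only [if_neg hcase]
      rw [h2] at h1
      have h3 : ∫ x₂ : R2, (fun r : ℝ => if r ≤ 1/2 then 32*M^2*(Real.log (r+ε))^2 + 288*M^2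
            + 4*((r+ε)^2*(Real.log (r+ε))^2)⁻¹ else 0) ‖x₁ - x₂‖
          = ∫ y : R2, (fun r : ℝ => if r ≤ 1/2 then 32*M^2*(Real.log (r+ε))^2 + 288*M^2
            + 4*((r+ε)^2*(Real.log (r+ε))^2)⁻¹ else 0) ‖y‖ :=
        integral_sub_left_eq_self (fun y : R2 => (fun r : ℝ => if r ≤ 1/2 then
          32*M^2*(Real.log (r+ε))^2 + 288*M^2 + 4*((r+ε)^2*(Real.log (r+ε))^2)⁻¹ else 0) ‖y‖)
          volume x₁
      rw [h3, polar2 (fun r : ℝ => if r ≤ 1/2 then 32*M^2*(Real.log (r+ε))^2 + 288*M^2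
        + 4*((r+ε)^2*(Real.log (r+ε))^2)⁻¹ else 0)] at h1
      refine le_trans h1 ?_
      have hrad := radial_bound M ε hM0 hε hε4
      have h2c : (0:ℝ) ≤ 2 * (volume (Metric.ball (0:R2) 1)).toReal := by linarith
      calc 2 * (volume (Metric.ball (0:R2) 1)).toReal * ∫ r in Set.Ioi (0:ℝ),
            r * (if r ≤ 1/2 then 32*M^2*(Real.log (r+ε))^2 + 288*M^2
              + 4*((r+ε)^2*(Real.log (r+ε))^2)⁻¹ else 0)
          ≤ 2 * (volume (Metric.ball (0:R2) 1)).toReal * (328*M^2+16) := by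
            rw [mul_assoc, mul_assoc]
            exact mul_le_mul_of_nonneg_left (by
              exact mul_le_mul_of_nonneg_left hrad hc₁0) (by norm_num)
        _ = 2 * (volume (Metric.ball (0:R2) 1)).toReal * (328*M^2+16) := rfl
    -- outer integral
    have hpt : ∀ x₁ : R2, (∫ x₂ : R2, gradSq1psi χ ε x₁ x₂)
        ≤ (Metric.closedBall (0:R2) (1/2)).indicator
            (fun _ => 2 * (volume (Metric.ball (0:R2) 1)).toReal * (328*M^2+16)) x₁ := by
      intro x₁
      by_cases hx₁ : x₁ ∈ Metric.closedBall (0:R2) (1/2)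
      · rw [Set.indicator_of_mem hx₁]
        exact hinner x₁
      · rw [Set.indicator_of_notMem hx₁]
        have hn1 : 1/2 < ‖x₁‖ := by
          have : ¬ ‖x₁‖ ≤ 1/2 := by
            simpa [Metric.mem_closedBall, dist_zero_right] using hx₁
          linarith [not_le.mp this]
        have hz : ∀ x₂ : R2, gradSq1psi χ ε x₁ x₂ = 0 := fun x₂ => hzero_out x₁ x₂ hn1
        simp only [hz, integral_zero]
        exact le_of_eq rfl
    have hindint : Integrable ((Metric.closedBall (0:R2) (1/2)).indicator
        (fun _ : R2 => 2 * (volume (Metric.ball (0:R2) 1)).toReal * (328*M^2+16))) :=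
      (integrable_indicator_iff measurableSet_closedBall).mpr
        (integrableOn_const measure_closedBall_lt_top.ne)
    have houter : (∫ x₁ : R2, ∫ x₂ : R2, gradSq1psi χ ε x₁ x₂)
        ≤ ∫ x₁ : R2, (Metric.closedBall (0:R2) (1/2)).indicator
            (fun _ => 2 * (volume (Metric.ball (0:R2) 1)).toReal * (328*M^2+16)) x₁ :=
      integral_mono_of_nonneg
        (Filter.Eventually.of_forall (fun x₁ => integral_nonneg (hgrad0 x₁)))
        hindint (Filter.Eventually.of_forall hpt)
    rw [integral_indicator_const _ measurableSet_closedBall, smul_eq_mul] at houter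
    calc (∫ x₁ : R2, ∫ x₂ : R2, gradSq1psi χ ε x₁ x₂)
        ≤ (volume (Metric.closedBall (0:R2) (1/2))).toReal
            * (2 * (volume (Metric.ball (0:R2) 1)).toReal * (328*M^2+16)) := houter
      _ = 2 * (volume (Metric.ball (0:R2) 1)).toReal * (328*M^2+16)
            * (volume (Metric.closedBall (0:R2) (1/2))).toReal := by ring
end
end
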